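/- arXiv:1807.04400 — 9 statements merged into one kernel-verified Lean document; each statement's English description precedes it below -/
import Mathlib

section
/- Let A = (A_0,…,A_{N−1}) be a sequence of integers with 0 ≤ A_m ≤ R for all m, and let K with 1 ≤ K ≤ N be a window length. Then the number of indices i with 0 ≤ i ≤ N−K−1 at which low(i) ≠ low(i+1) is at most 2·R·⌈N/K⌉. -/
/-- `wLow A K i` is the minimum of the window `A_i, A_{i+1}, …, A_{i+K-1}`. -/
noncomputable def wLow (A : ℕ → ℤ) (K i : ℕ) : ℤ :=
  sInf (A '' Set.Icc i (i + K - 1))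

section helpers

variable (A : ℕ → ℤ)

lemma sInf_img_le {i j x : ℕ} (h : x ∈ Set.Icc i j) :
    sInf (A '' Set.Icc i j) ≤ A x :=
  csInf_le ((Set.finite_Icc i j).image A).bddBelow ⟨x, h, rfl⟩

lemma le_sInf_img {i j : ℕ} {c : ℤ} (hij : i ≤ j) (h : ∀ x ∈ Set.Icc i j, c ≤ A x) :
    c ≤ sInf (A '' Set.Icc i j) := by
  apply le_csInf ((Set.nonempty_Icc.2 hij).image _)
  rintro _ ⟨x, hx, rfl⟩
  exact h x hx

lemma sInf_img_anti {i j i' j' : ℕ} (hne : i' ≤ j') (hsub : Set.Icc i' j' ⊆ Set.Icc i j) :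
    sInf (A '' Set.Icc i j) ≤ sInf (A '' Set.Icc i' j') :=
  csInf_le_csInf ((Set.finite_Icc i j).image A).bddBelow
    ((Set.nonempty_Icc.2 hne).image _) (Set.image_mono hsub)

lemma sInf_img_split {i t j : ℕ} (h1 : i < t) (h2 : t ≤ j) :
    sInf (A '' Set.Icc i j)
      = min (sInf (A '' Set.Icc i (t-1))) (sInf (A '' Set.Icc t j)) := by
  have hu : Set.Icc i j = Set.Icc i (t-1) ∪ Set.Icc t j := by
    ext x; simp only [Set.mem_Icc, Set.mem_union]; omega
  rw [hu, Set.image_union]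
  exact csInf_union ((Set.finite_Icc i (t-1)).image A).bddBelow
    ((Set.nonempty_Icc.2 (by omega)).image _)
    ((Set.finite_Icc t j).image A).bddBelow
    ((Set.nonempty_Icc.2 h2).image _)

lemma telesc (f : ℕ → ℤ) {a c : ℕ} (h : a ≤ c) :
    ∑ i ∈ Finset.Ico a c, (f (i+1) - f i) = f c - f a := by
  induction c, h using Nat.le_induction with
  | base => simp
  | succ n hn ih => rw [Finset.sum_Ico_succ_top hn, ih]; ring

end helpers

/-- Per-block bound: over a window of `K` consecutive differences, at most `2R` changes. -/
lemma block_bound (N K R : ℕ) (hK : 1 ≤ K) (A : ℕ → ℤ)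
    (hA : ∀ m : ℕ, m < N → 0 ≤ A m ∧ A m ≤ (R : ℤ)) (a : ℕ) :
    ∑ i ∈ Finset.Ico a (min (a + K) (N - K)),
      (if wLow A K i ≠ wLow A K (i + 1) then 1 else 0) ≤ 2 * R := by
  set M := N - K with hM
  by_cases haM : a < M
  swap
  · have : min (a + K) M ≤ a := by omega
    rw [Finset.Ico_eq_empty (by omega)]
    simp
  -- main case
  set c := min (a + K) M with hc
  set t := a + K with ht
  have hcM : c ≤ M := by omega
  have hac : a ≤ c := by omega
  have hct : c ≤ t := by omega
  have hMN : M + K ≤ N := by omega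
  -- the two auxiliary monotone functions
  set G : ℕ → ℤ := fun i => if i < t then min (sInf (A '' Set.Icc i (t-1))) R else (R:ℤ)
    with hG
  set F : ℕ → ℤ := fun j => if t ≤ j then min (sInf (A '' Set.Icc t j)) R else (R:ℤ)
    with hF
  have hGleR : ∀ i, G i ≤ R := by
    intro i; rw [hG]; dsimp only; split
    · exact min_le_right _ _
    · exact le_refl _
  have hFleR : ∀ j, F j ≤ R := by
    intro j; rw [hF]; dsimp only; split
    · exact min_le_right _ _
    · exact le_refl _
  have hGmono : ∀ i, G i ≤ G (i+1) := by
    intro i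
    by_cases h1 : i + 1 < t
    · rw [hG]; dsimp only
      rw [if_pos h1, if_pos (by omega)]
      refine min_le_min ?_ le_rfl
      exact sInf_img_anti A (by omega) (Set.Icc_subset_Icc (by omega) le_rfl)
    · have : G (i+1) = (R:ℤ) := by rw [hG]; dsimp only; rw [if_neg h1]
      rw [this]; exact hGleR i
  have hFanti : ∀ j, F (j+1) ≤ F j := by
    intro j
    by_cases h1 : t ≤ j
    · rw [hF]; dsimp only
      rw [if_pos h1, if_pos (by omega)]
      refine min_le_min ?_ le_rfl
      exact sInf_img_anti A (by omega) (Set.Icc_subset_Icc le_rfl (by omega))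
    · have : F j = (R:ℤ) := by rw [hF]; dsimp only; rw [if_neg h1]
      rw [this]; exact hFleR (j+1)
  -- the representation of the window minimum
  have hrep : ∀ i, a ≤ i → i ≤ t → i ≤ M → wLow A K i = min (G i) (F (i + K - 1)) := by
    intro i hai hit hiM
    have hiN : i < N := by omega
    have hAiR : A i ≤ (R:ℤ) := (hA i hiN).2
    rcases eq_or_lt_of_le hit with h | h
    · -- i = t
      have hG1 : G i = (R:ℤ) := by rw [hG]; dsimp only; rw [if_neg (by omega)]
      have hF1 : F (i + K - 1) = min (sInf (A '' Set.Icc t (i + K - 1))) R := by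
        rw [hF]; dsimp only; rw [if_pos (by omega)]
      have hIcc : Set.Icc i (i + K - 1) = Set.Icc t (i + K - 1) := by rw [h]
      have hle : sInf (A '' Set.Icc t (i + K - 1)) ≤ R := by
        refine le_trans (sInf_img_le A (x := i) ?_) hAiR
        rw [Set.mem_Icc]; omega
      rw [wLow, hIcc, hG1, hF1]
      omega
    · -- i < t
      rcases eq_or_lt_of_le hai with h2 | h2
      · -- i = a : window is exactly Icc i (t-1)
        have hwin : i + K - 1 = t - 1 := by omega
        have hG1 : G i = min (sInf (A '' Set.Icc i (t-1))) R := by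
          rw [hG]; dsimp only; rw [if_pos h]
        have hF1 : F (t - 1) = (R:ℤ) := by
          rw [hF]; dsimp only; rw [if_neg (by omega)]
        have hle : sInf (A '' Set.Icc i (t-1)) ≤ R := by
          refine le_trans (sInf_img_le A (x := i) ?_) hAiR
          rw [Set.mem_Icc]; omega
        rw [wLow, hwin, hG1, hF1]
        omega
      · -- a < i < t : split the window at t
        have hsplit := sInf_img_split A (i := i) (t := t) (j := i + K - 1)
          h (by omega)
        have hG1 : G i = min (sInf (A '' Set.Icc i (t-1))) R := by
          rw [hG]; dsimp only; rw [if_pos h]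
        have hF1 : F (i + K - 1) = min (sInf (A '' Set.Icc t (i + K - 1))) R := by
          rw [hF]; dsimp only; rw [if_pos (by omega)]
        have hle : sInf (A '' Set.Icc i (t-1)) ≤ R := by
          refine le_trans (sInf_img_le A (x := i) ?_) hAiR
          rw [Set.mem_Icc]; omega
        rw [wLow, hsplit, hG1, hF1]
        omega
  -- pointwise bound
  have hpt : ∀ i ∈ Finset.Ico a c,
      (if wLow A K i ≠ wLow A K (i + 1) then (1:ℤ) else 0)
        ≤ (G (i+1) - G i) + (F (i + K - 1) - F (i + K)) := by
    intro i hi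
    rw [Finset.mem_Ico] at hi
    obtain ⟨hai, hic⟩ := hi
    have e1 : wLow A K i = min (G i) (F (i + K - 1)) :=
      hrep i hai (by omega) (by omega)
    have e2 : wLow A K (i+1) = min (G (i+1)) (F (i + K)) := by
      have := hrep (i+1) (by omega) (by omega) (by omega)
      rwa [show i + 1 + K - 1 = i + K by omega] at this
    have h1 := hGmono i
    have h2 := hFanti (i + K - 1)
    rw [show i + K - 1 + 1 = i + K by omega] at h2
    split
    · rename_i hne
      rw [e1, e2] at hne
      omega
    · omega
  -- sum it up
  have htel2 : ∑ i ∈ Finset.Ico a c, (F (i + K - 1) - F (i + K))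
      = F (a + K - 1) - F (c + K - 1) := by
    have h := telesc (fun j => -F (j + K - 1)) hac
    calc ∑ i ∈ Finset.Ico a c, (F (i + K - 1) - F (i + K))
        = ∑ i ∈ Finset.Ico a c, (-F (i + 1 + K - 1) - -F (i + K - 1)) := by
          apply Finset.sum_congr rfl
          intro i _
          rw [show i + 1 + K - 1 = i + K by omega]
          ring
      _ = -F (c + K - 1) - -F (a + K - 1) := h
      _ = _ := by ring
  have hsum : ∑ i ∈ Finset.Ico a c,
      (if wLow A K i ≠ wLow A K (i + 1) then (1:ℤ) else 0)
        ≤ (G c - G a) + (F (a + K - 1) - F (c + K - 1)) := by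
    calc ∑ i ∈ Finset.Ico a c, (if wLow A K i ≠ wLow A K (i + 1) then (1:ℤ) else 0)
        ≤ ∑ i ∈ Finset.Ico a c, ((G (i+1) - G i) + (F (i + K - 1) - F (i + K))) :=
          Finset.sum_le_sum hpt
      _ = (∑ i ∈ Finset.Ico a c, (G (i+1) - G i))
            + ∑ i ∈ Finset.Ico a c, (F (i + K - 1) - F (i + K)) :=
          Finset.sum_add_distrib
      _ = (G c - G a) + (F (a + K - 1) - F (c + K - 1)) := by
          rw [telesc G hac, htel2]
  -- bounds on endpoints
  have hGa : (0:ℤ) ≤ G a := by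
    rw [hG]; dsimp only; rw [if_pos (by omega)]
    refine le_min ?_ (by positivity)
    apply le_sInf_img A (by omega)
    intro x hx
    rw [Set.mem_Icc] at hx
    exact (hA x (by omega)).1
  have hFc : (0:ℤ) ≤ F (c + K - 1) := by
    rw [hF]; dsimp only; split
    · refine le_min ?_ (by positivity)
      rename_i hh
      apply le_sInf_img A hh
      intro x hx
      rw [Set.mem_Icc] at hx
      exact (hA x (by omega)).1
    · positivity
  have hfinal : ∑ i ∈ Finset.Ico a c,
      (if wLow A K i ≠ wLow A K (i + 1) then (1:ℤ) else 0) ≤ 2 * R := by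
    have := hGleR c
    have := hFleR (a + K - 1)
    omega
  -- back to ℕ
  have hcast : ((∑ i ∈ Finset.Ico a c,
      (if wLow A K i ≠ wLow A K (i + 1) then 1 else 0) : ℕ) : ℤ)
      = ∑ i ∈ Finset.Ico a c, (if wLow A K i ≠ wLow A K (i + 1) then (1:ℤ) else 0) := by
    push_cast
    apply Finset.sum_congr rfl
    intro i _
    split <;> simp
  have : ((∑ i ∈ Finset.Ico a c,
      (if wLow A K i ≠ wLow A K (i + 1) then 1 else 0) : ℕ) : ℤ) ≤ (2 * R : ℕ) := by
    rw [hcast]; push_cast; exact hfinal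
  exact_mod_cast this

/-- If the values of `A` lie in `{0,…,R}`, then the sliding-window minimum changes
at most `2·R·⌈N/K⌉` times. -/
theorem stmt_2 (N K R : ℕ) (hK : 1 ≤ K) (hKN : K ≤ N) (A : ℕ → ℤ)
    (hA : ∀ m : ℕ, m < N → 0 ≤ A m ∧ A m ≤ (R : ℤ)) :
    {i : ℕ | i < N - K ∧ wLow A K i ≠ wLow A K (i + 1)}.ncard
      ≤ 2 * R * ((N + K - 1) / K) := by
  set M := N - K with hM
  -- the set as a finset
  have hset : {i : ℕ | i < M ∧ wLow A K i ≠ wLow A K (i + 1)}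
      = ↑((Finset.range M).filter (fun i => wLow A K i ≠ wLow A K (i+1))) := by
    ext i
    simp [Finset.mem_filter, Finset.mem_range]
  rw [hset, Set.ncard_coe_finset, Finset.card_filter]
  -- blockwise induction
  have key : ∀ b : ℕ, ∑ i ∈ Finset.Ico 0 (min (b * K) M),
      (if wLow A K i ≠ wLow A K (i + 1) then 1 else 0) ≤ b * (2 * R) := by
    intro b
    induction b with
    | zero => simp
    | succ b ih =>
      have hmul : b * K ≤ (b+1) * K := Nat.mul_le_mul_right K (by omega)
      have h1 : min (b * K) M ≤ min ((b+1) * K) M := min_le_min hmul le_rfl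
      have h2 : min ((b+1) * K) M = min (min (b * K) M + K) M := by
        rcases le_or_gt (b * K) M with h | h
        · rw [min_eq_left h]
          congr 1
          ring
        · rw [min_eq_right h.le, min_eq_right (le_trans h.le hmul),
            min_eq_right (Nat.le_add_right M K)]
      have hsplit : min (b * K) M ≤ min (min (b * K) M + K) M := by
        rw [← h2]; exact h1
      rw [h2, ← Finset.sum_Ico_consecutive _ (Nat.zero_le (min (b * K) M)) hsplit]
      have hb := block_bound N K R hK A hA (min (b * K) M)
      calc _ ≤ b * (2 * R) + 2 * R := Nat.add_le_add ih hb
        _ = (b+1) * (2*R) := by ring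
  -- choose number of blocks
  set B := (N + K - 1) / K with hB
  have hBK : M ≤ B * K := by
    have h := Nat.div_add_mod (N + K - 1) K
    have hr : (N + K - 1) % K < K := Nat.mod_lt _ (by omega)
    have hs : N + K - 1 + 1 = N + K := by omega
    have hNK : N ≤ K * B := by
      rw [hB]
      linarith
    calc M ≤ N := by omega
      _ ≤ K * B := hNK
      _ = B * K := Nat.mul_comm K B
  have := key B
  rw [min_eq_right hBK] at this
  calc ∑ i ∈ Finset.range M, (if wLow A K i ≠ wLow A K (i + 1) then 1 else 0)
      = ∑ i ∈ Finset.Ico 0 M, (if wLow A K i ≠ wLow A K (i + 1) then 1 else 0) := by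
        rw [Finset.range_eq_Ico]
    _ ≤ B * (2 * R) := this
    _ = 2 * R * B := by ring
end

section
/- Fix a sequence A of N integers, a window length K with 1 ≤ K ≤ N, and a rank l with 1 ≤ l ≤ K. For every i with 0 ≤ i < N−K and every k with 1 ≤ k ≤ l, the k-th smallest index in the set S_l([i, i+K−1]) is less than or equal to the k-th smallest index in the set S_l([i+1, i+K]). That is, sorted by index, the l-lowsets of the sliding windows are elementwise non-decreasing. -/
/-- The rank of `A_m` within the window `[i,j]`: the number of indices `m' ∈ [i,j]`
with `A_{m'} < A_m`, or `A_{m'} = A_m` and `m' ≤ m`. -/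
def wRank (A : ℕ → ℤ) (i j m : ℕ) : ℕ :=
  ((Finset.Icc i j).filter (fun m' => A m' < A m ∨ (A m' = A m ∧ m' ≤ m))).card

/-- The `l`-lowset of the window `[i,j]`: the set of indices whose element has rank
at most `l`. -/
def lowset (A : ℕ → ℤ) (l i j : ℕ) : Finset ℕ :=
  (Finset.Icc i j).filter (fun m => wRank A i j m ≤ l)

/-- The `k`-th smallest element of a finite set of naturals (1-indexed). -/
def kth (s : Finset ℕ) (k : ℕ) : ℕ :=
  (s.sort (· ≤ ·)).getD (k - 1) 0

lemma card_filter_sort (s : Finset ℕ) (p : ℕ → Prop) [DecidablePred p] :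
    (s.filter p).card = ((s.sort (· ≤ ·)).filter (fun x => decide (p x))).length := by
  rw [← List.countP_eq_length_filter, (Finset.sort_perm_toList s (· ≤ ·)).countP_eq]
  rw [Finset.toList, ← Multiset.coe_countP, Multiset.coe_toList,
    Multiset.countP_eq_card_filter]
  rfl

lemma filter_le_getD (L : List ℕ) (hs : List.Pairwise (· ≤ ·) L) (k : ℕ) (hk : 1 ≤ k)
    (hkL : k ≤ L.length) :
    k ≤ (L.filter (fun x => decide (x ≤ L.getD (k-1) 0))).length := by
  have hlt : k - 1 < L.length := by omega
  have hget : L.getD (k-1) 0 = L.get ⟨k-1, hlt⟩ := List.getD_eq_getElem L 0 hlt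
  have hsub : (L.take k).Sublist L := List.take_sublist k L
  have h1 : (L.take k).filter (fun x => decide (x ≤ L.getD (k-1) 0)) = L.take k := by
    apply List.filter_eq_self.2
    intro a ha
    rw [List.mem_iff_get] at ha
    obtain ⟨⟨i, hi⟩, rfl⟩ := ha
    simp only [List.length_take] at hi
    rw [List.get_eq_getElem, List.getElem_take]
    simp only [decide_eq_true_eq, hget]
    exact hs.rel_get_of_le (a := ⟨i, by omega⟩) (b := ⟨k-1, hlt⟩) (by simp only [Fin.mk_le_mk]; omega)
  calc k = (L.take k).length := by rw [List.length_take]; omega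
    _ = ((L.take k).filter _).length := by rw [h1]
    _ ≤ _ := (hsub.filter _).length_le

lemma getD_le_of_filter (L : List ℕ) (hs : List.Pairwise (· ≤ ·) L) (k x : ℕ) (hk : 1 ≤ k)
    (h : k ≤ (L.filter (fun a => decide (a ≤ x))).length) :
    L.getD (k-1) 0 ≤ x := by
  have hkL : k ≤ L.length := le_trans h (L.length_filter_le _)
  have hlt : k - 1 < L.length := by omega
  rw [List.getD_eq_getElem L 0 hlt]
  by_contra hx
  push_neg at hx
  have hdrop : (L.drop (k-1)).filter (fun a => decide (a ≤ x)) = [] := by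
    rw [List.filter_eq_nil_iff]
    intro a ha
    rw [List.mem_iff_get] at ha
    obtain ⟨⟨i, hi⟩, rfl⟩ := ha
    simp only [List.length_drop] at hi
    rw [List.get_eq_getElem, List.getElem_drop]
    have : L[k-1] ≤ L[k-1+i] :=
      hs.rel_get_of_le (a := ⟨k-1, hlt⟩) (b := ⟨k-1+i, by omega⟩) (by simp only [Fin.mk_le_mk]; omega)
    simp only [decide_eq_true_eq]
    omega
  have hlen : (L.filter (fun a => decide (a ≤ x))).length ≤ k - 1 := by
    calc (L.filter (fun a => decide (a ≤ x))).length
        = ((L.take (k-1) ++ L.drop (k-1)).filter (fun a => decide (a ≤ x))).length := by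
          rw [List.take_append_drop]
      _ = ((L.take (k-1)).filter _).length + ((L.drop (k-1)).filter _).length := by
          rw [List.filter_append, List.length_append]
      _ = ((L.take (k-1)).filter (fun a => decide (a ≤ x))).length := by
          rw [hdrop]; simp
      _ ≤ (L.take (k-1)).length := List.length_filter_le _ _
      _ ≤ k - 1 := by rw [List.length_take]; omega
  omega

lemma kth_le_kth (s s' : Finset ℕ) (k : ℕ) (hk : 1 ≤ k) (hks' : k ≤ s'.card)
    (h : ∀ t, (s'.filter (fun x => x ≤ t)).card ≤ (s.filter (fun x => x ≤ t)).card) :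
    kth s k ≤ kth s' k := by
  have h1 : k ≤ ((s'.sort (· ≤ ·)).filter (fun x => decide (x ≤ kth s' k))).length :=
    filter_le_getD _ (Finset.pairwise_sort _ _) k hk (by rwa [Finset.length_sort])
  rw [← card_filter_sort s' (fun x => x ≤ kth s' k)] at h1
  have h2 := le_trans h1 (h (kth s' k))
  rw [card_filter_sort s (fun x => x ≤ kth s' k)] at h2
  exact getD_le_of_filter _ (Finset.pairwise_sort _ _) k _ hk h2

lemma wRank_lt (A : ℕ → ℤ) (i j a b : ℕ) (_ : a ∈ Finset.Icc i j) (hb : b ∈ Finset.Icc i j)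
    (hab : A a < A b ∨ (A a = A b ∧ a ≤ b)) (hne : a ≠ b) :
    wRank A i j a < wRank A i j b := by
  apply Finset.card_lt_card
  constructor
  · intro m' hm'
    simp only [Finset.mem_filter] at hm' ⊢
    refine ⟨hm'.1, ?_⟩
    rcases hm'.2 with h | h <;> rcases hab with h' | h'
    · left; omega
    · left; omega
    · left; omega
    · right; omega
  · intro hsub
    have hbmem : b ∈ (Finset.Icc i j).filter (fun m' => A m' < A b ∨ (A m' = A b ∧ m' ≤ b)) :=
      Finset.mem_filter.2 ⟨hb, Or.inr ⟨rfl, le_refl b⟩⟩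
    have := hsub hbmem
    simp only [Finset.mem_filter] at this
    rcases this.2 with h | h <;> rcases hab with h' | h' <;> omega

lemma wRank_injOn (A : ℕ → ℤ) (i j : ℕ) :
    Set.InjOn (wRank A i j) (Finset.Icc i j) := by
  intro a ha b hb hab
  by_contra hne
  rcases lt_trichotomy (A a) (A b) with h | h | h
  · exact absurd hab (Nat.ne_of_lt (wRank_lt A i j a b ha hb (Or.inl h) hne))
  · rcases le_total a b with h' | h'
    · exact absurd hab (Nat.ne_of_lt (wRank_lt A i j a b ha hb (Or.inr ⟨h, h'⟩) hne))
    · exact absurd hab.symm (Nat.ne_of_lt (wRank_lt A i j b a hb ha (Or.inr ⟨h.symm, h'⟩) (Ne.symm hne)))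
  · exact absurd hab.symm (Nat.ne_of_lt (wRank_lt A i j b a hb ha (Or.inl h) (Ne.symm hne)))

lemma wRank_mem (A : ℕ → ℤ) (i j m : ℕ) (hm : m ∈ Finset.Icc i j) :
    wRank A i j m ∈ Finset.Icc 1 (j + 1 - i) := by
  simp only [Finset.mem_Icc]
  constructor
  · have : m ∈ (Finset.Icc i j).filter (fun m' => A m' < A m ∨ (A m' = A m ∧ m' ≤ m)) :=
      Finset.mem_filter.2 ⟨hm, Or.inr ⟨rfl, le_refl m⟩⟩
    exact Finset.card_pos.2 ⟨m, this⟩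
  · calc wRank A i j m ≤ (Finset.Icc i j).card := Finset.card_filter_le _ _
      _ = j + 1 - i := Nat.card_Icc i j

lemma card_lowset (A : ℕ → ℤ) (l i j : ℕ) (hij : i ≤ j) (hl : l ≤ j + 1 - i) :
    (lowset A l i j).card = l := by
  set f := wRank A i j with hf
  have hinj := wRank_injOn A i j
  have himg : (Finset.Icc i j).image f = Finset.Icc 1 (j + 1 - i) := by
    apply Finset.eq_of_subset_of_card_le
    · intro r hr
      simp only [Finset.mem_image] at hr
      obtain ⟨m, hm, rfl⟩ := hr
      exact wRank_mem A i j m hm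
    · rw [Finset.card_image_of_injOn hinj, Nat.card_Icc, Nat.card_Icc]; omega
  have h3 : (lowset A l i j).card = (((Finset.Icc i j).image f).filter (fun r => r ≤ l)).card := by
    rw [Finset.filter_image,
      Finset.card_image_of_injOn (hinj.mono (fun x hx => Finset.mem_coe.2 (Finset.filter_subset _ _ (Finset.mem_coe.1 hx))))]
    rfl
  rw [h3, himg]
  have : (Finset.Icc 1 (j + 1 - i)).filter (fun r => r ≤ l) = Finset.Icc 1 l := by
    ext r; simp only [Finset.mem_filter, Finset.mem_Icc]; omega
  rw [this, Nat.card_Icc]; omega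

lemma card_filter_insert {a : ℕ} {s : Finset ℕ} (h : a ∉ s) (P : ℕ → Prop) [DecidablePred P] :
    ((insert a s).filter P).card = (s.filter P).card + if P a then 1 else 0 := by
  rw [Finset.filter_insert]
  split
  · rw [Finset.card_insert_of_notMem (fun hc => h (Finset.filter_subset _ _ hc))]
  · omega

lemma key (A : ℕ → ℤ) (K l i m : ℕ) (hK : 1 ≤ K) (hm : m ∈ Finset.Icc (i+1) (i+K-1))
    (h2 : wRank A (i+1) (i+K) m ≤ l) (h1 : l < wRank A i (i+K-1) m) :
    wRank A i (i+K-1) m = l + 1 ∧ (A i < A m ∨ (A i = A m ∧ i ≤ m)) := by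
  rw [Finset.mem_Icc] at hm
  have hW1 : Finset.Icc i (i+K-1) = insert i (Finset.Icc (i+1) (i+K-1)) := by
    ext x; simp only [Finset.mem_Icc, Finset.mem_insert]; omega
  have hW2 : Finset.Icc (i+1) (i+K) = insert (i+K) (Finset.Icc (i+1) (i+K-1)) := by
    ext x; simp only [Finset.mem_Icc, Finset.mem_insert]; omega
  have hi : i ∉ Finset.Icc (i+1) (i+K-1) := by simp only [Finset.mem_Icc]; omega
  have hiK : i + K ∉ Finset.Icc (i+1) (i+K-1) := by simp only [Finset.mem_Icc]; omega
  unfold wRank at h1 h2 ⊢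
  rw [hW1, card_filter_insert hi] at h1 ⊢
  rw [hW2, card_filter_insert hiK] at h2
  split_ifs at h1 h2 ⊢ with hPi hPK <;> first
    | (refine ⟨by omega, hPi⟩)
    | omega

lemma count_mono (A : ℕ → ℤ) (K l i t : ℕ) (hK : 1 ≤ K) (hl : 1 ≤ l) (hlK : l ≤ K) :
    ((lowset A l (i+1) (i+K)).filter (fun x => x ≤ t)).card ≤
    ((lowset A l i (i+K-1)).filter (fun x => x ≤ t)).card := by
  by_cases ht : i + K ≤ t
  · have e2 : (lowset A l (i+1) (i+K)).filter (fun x => x ≤ t) = lowset A l (i+1) (i+K) :=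
      Finset.filter_true_of_mem (fun x hx => by
        have := (Finset.mem_Icc.1 (Finset.mem_filter.1 hx).1).2; omega)
    have e1 : (lowset A l i (i+K-1)).filter (fun x => x ≤ t) = lowset A l i (i+K-1) :=
      Finset.filter_true_of_mem (fun x hx => by
        have := (Finset.mem_Icc.1 (Finset.mem_filter.1 hx).1).2; omega)
    rw [e1, e2, card_lowset A l (i+1) (i+K) (by omega) (by omega),
      card_lowset A l i (i+K-1) (by omega) (by omega)]
  · push_neg at ht
    apply Finset.card_le_card_of_injOn (fun m => if wRank A i (i+K-1) m ≤ l then m else i)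
    · intro m hm
      rw [Finset.mem_coe, Finset.mem_filter, lowset, Finset.mem_filter, Finset.mem_Icc] at hm
      obtain ⟨⟨hmw, hr2⟩, hmt⟩ := hm
      have hmM : m ∈ Finset.Icc (i+1) (i+K-1) := Finset.mem_Icc.2 (by omega)
      by_cases hr1 : wRank A i (i+K-1) m ≤ l
      · simp only [if_pos hr1]
        exact Finset.mem_filter.2 ⟨Finset.mem_filter.2 ⟨Finset.mem_Icc.2 (by omega), hr1⟩, by omega⟩
      · simp only [if_neg hr1]
        obtain ⟨hrank, hP⟩ := key A K l i m hK hmM hr2 (by omega)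
        have hiS : wRank A i (i+K-1) i ≤ l := by
          have := wRank_lt A i (i+K-1) i m (Finset.mem_Icc.2 (by omega))
            (Finset.mem_Icc.2 (by omega)) hP (by omega)
          omega
        exact Finset.mem_filter.2 ⟨Finset.mem_filter.2 ⟨Finset.mem_Icc.2 (by omega), hiS⟩, by omega⟩
    · intro m1 hm1 m2 hm2 heq
      rw [Finset.mem_coe, Finset.mem_filter, lowset, Finset.mem_filter, Finset.mem_Icc] at hm1 hm2
      obtain ⟨⟨hm1w, hr21⟩, hm1t⟩ := hm1
      obtain ⟨⟨hm2w, hr22⟩, hm2t⟩ := hm2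
      simp only at heq
      by_cases hr11 : wRank A i (i+K-1) m1 ≤ l <;> by_cases hr12 : wRank A i (i+K-1) m2 ≤ l
      · rwa [if_pos hr11, if_pos hr12] at heq
      · rw [if_pos hr11, if_neg hr12] at heq; omega
      · rw [if_neg hr11, if_pos hr12] at heq; omega
      · obtain ⟨hrank1, -⟩ := key A K l i m1 hK (Finset.mem_Icc.2 (by omega)) hr21 (by omega)
        obtain ⟨hrank2, -⟩ := key A K l i m2 hK (Finset.mem_Icc.2 (by omega)) hr22 (by omega)
        exact wRank_injOn A i (i+K-1) (by simp only [Finset.coe_Icc, Set.mem_Icc]; omega)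
          (by simp only [Finset.coe_Icc, Set.mem_Icc]; omega) (by omega)

/-- Sorted by index, the `l`-lowsets of the sliding windows are elementwise
non-decreasing. -/
theorem stmt_3 (N K l : ℕ) (A : ℕ → ℤ) (hK : 1 ≤ K) (hKN : K ≤ N)
    (hl : 1 ≤ l) (hlK : l ≤ K) :
    ∀ i : ℕ, i + 1 ≤ N - K → ∀ k : ℕ, 1 ≤ k → k ≤ l →
      kth (lowset A l i (i + K - 1)) k ≤ kth (lowset A l (i + 1) (i + K)) k := by
  intro i _ k hk1 hkl
  apply kth_le_kth
  · exact hk1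
  · rw [card_lowset A l (i+1) (i+K) (by omega) (by omega)]; omega
  · intro t; exact count_mono A K l i t hK hl hlK
end

section
/- Fix a sequence A of N integers, indices i ≤ j < N−1 with j−i+1 ≥ l for a rank l ≥ 1. When the window [i,j] is extended on the right to [i,j+1], the l-lowset does not move left: for every k with 1 ≤ k ≤ l, the k-th smallest index in S_l([i,j+1]) is greater than or equal to the k-th smallest index in S_l([i,j]). -/
lemma kth_eq_getElem (s : Finset ℕ) (k : ℕ) (h : k - 1 < (s.sort (· ≤ ·)).length) :
    kth s k = (s.sort (· ≤ ·))[k - 1] :=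
  List.getD_eq_getElem _ _ h

lemma wRank_lt_wRank (A : ℕ → ℤ) (i j m m' : ℕ) (hm' : m' ∈ Finset.Icc i j)
    (h : A m < A m' ∨ (A m = A m' ∧ m < m')) :
    wRank A i j m < wRank A i j m' := by
  apply Finset.card_lt_card
  constructor
  · intro x hx
    simp only [Finset.mem_filter] at hx ⊢
    refine ⟨hx.1, ?_⟩
    rcases hx.2 with h1 | ⟨h1, h2⟩ <;> rcases h with h' | ⟨h', hmm⟩
    · exact Or.inl (h1.trans h')
    · exact Or.inl (h' ▸ h1)
    · exact Or.inl (h1 ▸ h')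
    · exact Or.inr ⟨h1.trans h', h2.trans hmm.le⟩
  · intro hsub
    have hh : m' ∈ (Finset.Icc i j).filter (fun x => A x < A m' ∨ (A x = A m' ∧ x ≤ m')) := by
      simp [hm']
    have := hsub hh
    simp only [Finset.mem_filter] at this
    rcases this.2 with h1 | ⟨h1, h2⟩ <;> rcases h with h' | ⟨h', hmm⟩ <;> omega

lemma wRank_le_card (A : ℕ → ℤ) (i j m : ℕ) :
    wRank A i j m ≤ (Finset.Icc i j).card :=
  Finset.card_filter_le _ _

lemma card_lowset_ge (A : ℕ → ℤ) (l i j : ℕ) (hlen : l ≤ (Finset.Icc i j).card) :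
    l ≤ (lowset A l i j).card := by
  classical
  set W := Finset.Icc i j with hW
  have hsplit : (W.filter (fun m => wRank A i j m ≤ l)).card
      + (W.filter (fun m => ¬ wRank A i j m ≤ l)).card = W.card :=
    Finset.card_filter_add_card_filter_not _
  have hT : (W.filter (fun m => ¬ wRank A i j m ≤ l)).card ≤ W.card - l := by
    have h2 : (W.filter (fun m => ¬ wRank A i j m ≤ l)).card ≤ (Finset.Icc (l+1) W.card).card := by
      apply Finset.card_le_card_of_injOn (wRank A i j)
      · intro m hm
        simp only [Finset.mem_coe, Finset.mem_filter, not_le] at hm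
        simp only [Finset.mem_coe, Finset.mem_Icc]
        exact ⟨hm.2, wRank_le_card A i j m⟩
      · intro m hm m' hm' he
        simp only [Finset.coe_filter, Set.mem_setOf_eq] at hm hm'
        exact wRank_injOn A i j hm.1 hm'.1 he
    simpa [Nat.card_Icc] using h2
  have hlow : (lowset A l i j).card = (W.filter (fun m => wRank A i j m ≤ l)).card := rfl
  omega

lemma kth_mem (s : Finset ℕ) (k : ℕ) (h1 : 1 ≤ k) (hk : k ≤ s.card) : kth s k ∈ s := by
  have hlt : k - 1 < (s.sort (· ≤ ·)).length := by
    rw [Finset.length_sort]; omega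
  rw [kth_eq_getElem _ _ hlt]
  exact (Finset.mem_sort _).1 (List.getElem_mem hlt)

lemma kth_le_count (s : Finset ℕ) (k : ℕ) (h1 : 1 ≤ k) (hk : k ≤ s.card) :
    k ≤ (s.filter (· ≤ kth s k)).card := by
  classical
  have hlenL : (s.sort (· ≤ ·)).length = s.card := Finset.length_sort _
  have hk1 : k - 1 < (s.sort (· ≤ ·)).length := by omega
  have hcard : ((Finset.range k).image (fun m => (s.sort (· ≤ ·)).getD m 0)).card = k := by
    rw [Finset.card_image_of_injOn, Finset.card_range]
    intro a ha b hb he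
    simp only [Finset.coe_range, Set.mem_Iio] at ha hb
    have hax : a < (s.sort (· ≤ ·)).length := by omega
    have hbx : b < (s.sort (· ≤ ·)).length := by omega
    simp only [List.getD_eq_getElem _ _ hax, List.getD_eq_getElem _ _ hbx] at he
    exact ((Finset.sort_nodup _ _).getElem_inj_iff).1 he
  calc k = ((Finset.range k).image (fun m => (s.sort (· ≤ ·)).getD m 0)).card := hcard.symm
    _ ≤ (s.filter (· ≤ kth s k)).card := by
      apply Finset.card_le_card
      intro x hx
      simp only [Finset.mem_image, Finset.mem_range] at hx
      obtain ⟨m, hm, rfl⟩ := hx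
      have hmx : m < (s.sort (· ≤ ·)).length := by omega
      rw [List.getD_eq_getElem _ _ hmx]
      refine Finset.mem_filter.2 ⟨(Finset.mem_sort _).1 (List.getElem_mem hmx), ?_⟩
      rw [kth_eq_getElem _ _ hk1]
      rcases Nat.lt_or_ge m (k-1) with h | h
      · exact List.Pairwise.rel_get_of_lt (Finset.pairwise_sort _ _) h
      · have : m = k - 1 := by omega
        simp [this]

lemma count_le_kth (s : Finset ℕ) (x k : ℕ) (h1 : 1 ≤ k)
    (hk : k ≤ (s.filter (· ≤ x)).card) : kth s k ≤ x := by
  classical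
  have hklen : k ≤ s.card := hk.trans (Finset.card_le_card (Finset.filter_subset _ _))
  have hk1 : k - 1 < (s.sort (· ≤ ·)).length := by rw [Finset.length_sort]; omega
  rw [kth_eq_getElem _ _ hk1]
  by_contra hgt
  push_neg at hgt
  -- every element of the filter has sort-index < k-1
  have hcard : (s.filter (· ≤ x)).card ≤ k - 1 := by
    have : (s.filter (· ≤ x)).card ≤ (Finset.range (k-1)).card := by
      apply Finset.card_le_card_of_injOn (fun y => (s.sort (· ≤ ·)).idxOf y)
      · intro y hy
        simp only [Finset.mem_coe, Finset.mem_filter] at hy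
        have hyL : y ∈ s.sort (· ≤ ·) := (Finset.mem_sort _).2 hy.1
        have hidx : (s.sort (· ≤ ·)).idxOf y < (s.sort (· ≤ ·)).length :=
          List.idxOf_lt_length_iff.2 hyL
        simp only [Finset.mem_coe, Finset.mem_range]
        by_contra hge
        push_neg at hge
        have : (s.sort (· ≤ ·))[k-1] ≤ (s.sort (· ≤ ·))[(s.sort (· ≤ ·)).idxOf y] := by
          rcases Nat.lt_or_ge (k-1) ((s.sort (· ≤ ·)).idxOf y) with h | h
          · exact List.Pairwise.rel_get_of_lt (Finset.pairwise_sort _ _) h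
          · have : k - 1 = (s.sort (· ≤ ·)).idxOf y := by omega
            simp [this]
        rw [List.getElem_idxOf hidx] at this
        omega
      · intro a ha b hb he
        simp only [Finset.coe_filter, Set.mem_setOf_eq] at ha hb
        have haL : a ∈ s.sort (· ≤ ·) := (Finset.mem_sort _).2 ha.1
        have hbL : b ∈ s.sort (· ≤ ·) := (Finset.mem_sort _).2 hb.1
        exact (List.idxOf_inj haL).1 he
    simpa using this
  omega

/-- Extending a window on the right does not move the `l`-lowset left: for each `k`,
the `k`-th smallest index of `S_l([i,j+1])` is `≥` that of `S_l([i,j])`. -/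
theorem stmt_4 (N l : ℕ) (A : ℕ → ℤ) (i j : ℕ) (hij : i ≤ j) (hj : j < N - 1)
    (hl : 1 ≤ l) (hlen : l ≤ j - i + 1) :
    ∀ k : ℕ, 1 ≤ k → k ≤ l →
      kth (lowset A l i j) k ≤ kth (lowset A l i (j + 1)) k := by
  intro k hk1 hkl
  have hcardW : l ≤ (Finset.Icc i j).card := by rw [Nat.card_Icc]; omega
  have hcardW' : l ≤ (Finset.Icc i (j+1)).card := by rw [Nat.card_Icc]; omega
  have hS : l ≤ (lowset A l i j).card := card_lowset_ge A l i j hcardW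
  have hS' : l ≤ (lowset A l i (j+1)).card := card_lowset_ge A l i (j+1) hcardW'
  -- elements of the extended lowset that stay in [i,j] belong to the old lowset
  have hsub : ∀ m ∈ lowset A l i (j+1), m ≤ j → m ∈ lowset A l i j := by
    intro m hm hmj
    simp only [lowset, Finset.mem_filter, Finset.mem_Icc] at hm ⊢
    refine ⟨⟨hm.1.1, hmj⟩, le_trans ?_ hm.2⟩
    apply Finset.card_le_card
    intro x hx
    simp only [Finset.mem_filter, Finset.mem_Icc] at hx ⊢
    exact ⟨⟨hx.1.1, by omega⟩, hx.2⟩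
  set x := kth (lowset A l i (j+1)) k with hx
  have hxmem : x ∈ lowset A l i (j+1) := kth_mem _ k hk1 (by omega)
  have hxle : x ≤ j + 1 := by
    simp only [lowset, Finset.mem_filter, Finset.mem_Icc] at hxmem
    exact hxmem.1.2
  rcases Nat.lt_or_ge x (j+1) with hxj | hxj
  · -- x ≤ j : transfer the count
    have hcount : k ≤ ((lowset A l i (j+1)).filter (· ≤ x)).card :=
      kth_le_count _ k hk1 (by omega)
    have hmono : ((lowset A l i (j+1)).filter (· ≤ x)) ⊆ ((lowset A l i j).filter (· ≤ x)) := by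
      intro y hy
      simp only [Finset.mem_filter] at hy ⊢
      exact ⟨hsub y hy.1 (by omega), hy.2⟩
    exact count_le_kth _ x k hk1 (hcount.trans (Finset.card_le_card hmono))
  · -- x = j+1 : trivial since kth of old lowset is ≤ j
    have hmem : kth (lowset A l i j) k ∈ lowset A l i j := kth_mem _ k hk1 (by omega)
    have hmem' : kth (lowset A l i j) k ∈ Finset.Icc i j := (Finset.mem_filter.1 hmem).1
    have := (Finset.mem_Icc.1 hmem').2
    omega
end

section
/- Fix a sequence A of N integers, a window length K with 1 ≤ K ≤ N, a rank l with 1 ≤ l ≤ K, and any index b. Then for every i with 0 ≤ i < N−K, |Conf_{l,b}([i, i+K−1])| ≤ |Conf_{l,b}([i+1, i+K])|; that is, the number of ranks among {1,…,l} whose witnessing index exceeds b is non-decreasing as the window slides right. -/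
/-- `sIdx A i j r` is the unique index in `[i,j]` whose element has rank `r`
(recovered as the `sup` of the singleton filter). -/
def sIdx (A : ℕ → ℤ) (i j r : ℕ) : ℕ :=
  ((Finset.Icc i j).filter (fun m => wRank A i j m = r)).sup id

/-- `Conf_{l,b}([i,j])`: the set of ranks `l' ∈ {1,…,l}` whose witnessing index
exceeds `b`. -/
def conf (A : ℕ → ℤ) (l b i j : ℕ) : Finset ℕ :=
  (Finset.Icc 1 l).filter (fun r => b < sIdx A i j r)

namespace StmtAux

variable (A : ℕ → ℤ)

/-- the tie-broken order -/
def Pre (A : ℕ → ℤ) (x y : ℕ) : Prop := A x < A y ∨ (A x = A y ∧ x ≤ y)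

instance (x y : ℕ) : Decidable (Pre A x y) := by unfold Pre; infer_instance

lemma pre_refl (x : ℕ) : Pre A x x := Or.inr ⟨rfl, le_rfl⟩

lemma pre_total (x y : ℕ) : Pre A x y ∨ Pre A y x := by
  unfold Pre
  rcases lt_trichotomy (A x) (A y) with h | h | h
  · exact Or.inl (Or.inl h)
  · rcases le_total x y with h' | h'
    · exact Or.inl (Or.inr ⟨h, h'⟩)
    · exact Or.inr (Or.inr ⟨h.symm, h'⟩)
  · exact Or.inr (Or.inl h)

lemma pre_antisymm {x y : ℕ} (h : Pre A x y) (h' : Pre A y x) : x = y := by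
  rcases h with h | ⟨h1, h2⟩ <;> rcases h' with h' | ⟨h1', h2'⟩ <;> omega

lemma pre_trans {x y z : ℕ} (h : Pre A x y) (h' : Pre A y z) : Pre A x z := by
  rcases h with h | ⟨h1, h2⟩ <;> rcases h' with h' | ⟨h1', h2'⟩
  · exact Or.inl (h.trans h')
  · exact Or.inl (h1' ▸ h)
  · exact Or.inl (h1 ▸ h')
  · exact Or.inr ⟨h1.trans h1', h2.trans h2'⟩

/-- the rank of `m` within a finset `s`. -/
def rnk (s : Finset ℕ) (m : ℕ) : ℕ := (s.filter (fun x => Pre A x m)).card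

lemma wRank_eq (i j m : ℕ) : wRank A i j m = rnk A (Finset.Icc i j) m := by
  unfold wRank rnk
  congr 1

lemma rnk_lt_rnk {s : Finset ℕ} {x y : ℕ} (hy : y ∈ s)
    (hxy : Pre A x y) (hne : x ≠ y) : rnk A s x < rnk A s y := by
  apply Finset.card_lt_card
  constructor
  · intro z hz
    simp only [Finset.mem_filter] at hz ⊢
    exact ⟨hz.1, pre_trans A hz.2 hxy⟩
  · intro hsub
    have hy' : y ∈ s.filter (fun z => Pre A z x) :=
      hsub (by simp [Finset.mem_filter, hy, pre_refl])
    simp only [Finset.mem_filter] at hy'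
    exact hne (pre_antisymm A hxy hy'.2)

lemma rnk_injOn {s : Finset ℕ} {x y : ℕ} (hx : x ∈ s) (hy : y ∈ s)
    (h : rnk A s x = rnk A s y) : x = y := by
  by_contra hne
  rcases pre_total A x y with hp | hp
  · exact absurd h (Nat.ne_of_lt (rnk_lt_rnk A hy hp hne))
  · exact absurd h.symm (Nat.ne_of_lt (rnk_lt_rnk A hx hp (Ne.symm hne)))

lemma one_le_rnk {s : Finset ℕ} {x : ℕ} (hx : x ∈ s) : 1 ≤ rnk A s x := by
  rw [Nat.one_le_iff_ne_zero, ← Nat.pos_iff_ne_zero]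
  apply Finset.card_pos.2
  exact ⟨x, by simp [Finset.mem_filter, hx, pre_refl]⟩

lemma rnk_le_card (s : Finset ℕ) (x : ℕ) : rnk A s x ≤ s.card :=
  Finset.card_filter_le _ _

lemma rnk_surj {s : Finset ℕ} {r : ℕ} (h1 : 1 ≤ r) (h2 : r ≤ s.card) :
    ∃ x ∈ s, rnk A s x = r := by
  have := Finset.surj_on_of_inj_on_of_card_le (s := s) (t := Finset.Icc 1 s.card)
    (fun a _ => rnk A s a)
    (fun a ha => Finset.mem_Icc.2 ⟨one_le_rnk A ha, rnk_le_card A s a⟩)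
    (fun a₁ a₂ ha₁ ha₂ hr => rnk_injOn A ha₁ ha₂ hr)
    (by rw [Nat.card_Icc]; omega)
  obtain ⟨a, ha, har⟩ := this r (Finset.mem_Icc.2 ⟨h1, h2⟩)
  exact ⟨a, ha, har.symm⟩

lemma sIdx_eq {i j x : ℕ} (hx : x ∈ Finset.Icc i j) :
    sIdx A i j (wRank A i j x) = x := by
  unfold sIdx
  have : (Finset.Icc i j).filter (fun m => wRank A i j m = wRank A i j x) = {x} := by
    ext m
    simp only [Finset.mem_filter, Finset.mem_singleton]
    constructor
    · rintro ⟨hm, hr⟩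
      rw [wRank_eq, wRank_eq] at hr
      exact rnk_injOn A hm hx hr
    · rintro rfl; exact ⟨hx, rfl⟩
  rw [this, Finset.sup_singleton, id]

lemma conf_card {l b i j : ℕ} (hl : l ≤ (Finset.Icc i j).card) :
    (conf A l b i j).card
      = ((Finset.Icc i j).filter (fun m => b < m ∧ wRank A i j m ≤ l)).card := by
  symm
  apply Finset.card_nbij (fun m => wRank A i j m)
  · intro m hm
    simp only [Finset.mem_coe, Finset.mem_filter] at hm
    obtain ⟨hm, hbm, hml⟩ := hm
    unfold conf
    simp only [Finset.mem_coe, Finset.mem_filter, Finset.mem_Icc]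
    refine ⟨⟨by rw [wRank_eq]; exact one_le_rnk A hm, hml⟩, ?_⟩
    rw [sIdx_eq A hm]; exact hbm
  · intro x hx y hy hxy
    simp only [Finset.coe_filter, Set.mem_setOf_eq] at hx hy
    have hxy' : rnk A (Finset.Icc i j) x = rnk A (Finset.Icc i j) y := by
      rw [← wRank_eq, ← wRank_eq]; exact hxy
    exact rnk_injOn A hx.1 hy.1 hxy'
  · intro r hr
    unfold conf at hr
    simp only [Finset.coe_filter, Finset.mem_Icc, Set.mem_setOf_eq] at hr
    obtain ⟨⟨h1, h2⟩, hb⟩ := hr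
    obtain ⟨x, hx, hxr⟩ := rnk_surj A h1 (h2.trans hl)
    have hw : wRank A i j x = r := by rw [wRank_eq]; exact hxr
    refine ⟨x, ?_, hw⟩
    simp only [Finset.coe_filter, Set.mem_setOf_eq]
    refine ⟨hx, ?_, by omega⟩
    rw [← hw] at hb
    rwa [sIdx_eq A hx] at hb

lemma card_rnk_le {s : Finset ℕ} {l : ℕ} (hl : l ≤ s.card) :
    (s.filter (fun m => rnk A s m ≤ l)).card = l := by
  have : (s.filter (fun m => rnk A s m ≤ l)).card = (Finset.Icc 1 l).card := by
    apply Finset.card_nbij (fun m => rnk A s m)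
    · intro m hm
      simp only [Finset.mem_coe, Finset.mem_filter] at hm
      exact Finset.mem_Icc.2 ⟨one_le_rnk A hm.1, hm.2⟩
    · intro x hx y hy hxy
      simp only [Finset.coe_filter, Set.mem_setOf_eq] at hx hy
      exact rnk_injOn A hx.1 hy.1 hxy
    · intro r hr
      simp only [Finset.coe_Icc, Set.mem_Icc] at hr
      obtain ⟨x, hx, hxr⟩ := rnk_surj A hr.1 (hr.2.trans hl)
      exact ⟨x, by simp [Finset.mem_filter, hx, hxr, hr.2], hxr⟩
  rw [this, Nat.card_Icc]; omega

end StmtAux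

open StmtAux in
/-- The size of `Conf_{l,b}` is non-decreasing as the window slides right. -/
theorem stmt_5 (N K l b : ℕ) (A : ℕ → ℤ) (hK : 1 ≤ K) (hKN : K ≤ N)
    (hl : 1 ≤ l) (hlK : l ≤ K) :
    ∀ i : ℕ, i + 1 ≤ N - K →
      (conf A l b i (i + K - 1)).card ≤ (conf A l b (i + 1) (i + K)).card := by
  intro i _
  have hcs : (Finset.Icc i (i + K - 1)).card = K := by rw [Nat.card_Icc]; omega
  have hct : (Finset.Icc (i + 1) (i + K)).card = K := by rw [Nat.card_Icc]; omega
  rw [conf_card A (by omega : l ≤ (Finset.Icc i (i + K - 1)).card),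
      conf_card A (by omega : l ≤ (Finset.Icc (i + 1) (i + K)).card)]
  set s : Finset ℕ := Finset.Icc i (i + K - 1) with hs
  set t : Finset ℕ := Finset.Icc (i + 1) (i + K) with ht
  -- basic window comparison lemmas
  have hts_sub : ∀ m : ℕ, ¬ Pre A (i + K) m →
      rnk A t m ≤ rnk A s m := by
    intro m hnp
    apply Finset.card_le_card
    intro x hx
    simp only [Finset.mem_filter, ht, hs, Finset.mem_Icc] at hx ⊢
    have hxne : x ≠ i + K := by rintro rfl; exact hnp hx.2
    exact ⟨⟨by omega, by omega⟩, hx.2⟩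
  have hts_succ : ∀ m : ℕ, rnk A t m ≤ rnk A s m + 1 := by
    intro m
    have hsub : t.filter (fun x => Pre A x m)
        ⊆ insert (i + K) (s.filter (fun x => Pre A x m)) := by
      intro x hx
      simp only [Finset.mem_filter, ht, hs, Finset.mem_Icc, Finset.mem_insert] at hx ⊢
      by_cases hxe : x = i + K
      · exact Or.inl hxe
      · exact Or.inr ⟨⟨by omega, by omega⟩, hx.2⟩
    calc rnk A t m ≤ (insert (i + K) (s.filter (fun x => Pre A x m))).card :=
          Finset.card_le_card hsub
      _ ≤ _ := Finset.card_insert_le _ _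
  by_cases hbi : b < i
  · -- all indices exceed b; RHS has exactly l elements, LHS at most l
    have hle : (s.filter (fun m => b < m ∧ wRank A i (i + K - 1) m ≤ l)).card ≤ l := by
      calc _ ≤ (s.filter (fun m => rnk A s m ≤ l)).card := by
            apply Finset.card_le_card
            intro x hx
            simp only [Finset.mem_filter] at hx ⊢
            rw [wRank_eq, ← hs] at hx
            exact ⟨hx.1, hx.2.2⟩
        _ = l := card_rnk_le A (by omega)
    have heq : (t.filter (fun m => b < m ∧ wRank A (i + 1) (i + K) m ≤ l)).card = l := by
      have : t.filter (fun m => b < m ∧ wRank A (i + 1) (i + K) m ≤ l)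
          = t.filter (fun m => rnk A t m ≤ l) := by
        apply Finset.filter_congr
        intro x hx
        simp only [ht, Finset.mem_Icc] at hx
        rw [wRank_eq, ← ht]
        constructor
        · exact fun h => h.2
        · exact fun h => ⟨by omega, h⟩
      rw [this]
      exact card_rnk_le A (by omega)
    omega
  · -- b ≥ i : injection, mapping the unique bad index to i+K
    push_neg at hbi
    apply Finset.card_le_card_of_injOn
      (fun m => if wRank A (i + 1) (i + K) m ≤ l then m else i + K)
    · intro m hm
      simp only [Finset.mem_coe, Finset.mem_filter, hs, Finset.mem_Icc] at hm
      obtain ⟨⟨hmi, hmj⟩, hbm, hml⟩ := hm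
      have hmt : m ∈ t := by simp only [ht, Finset.mem_Icc]; omega
      rw [wRank_eq, ← hs] at hml
      by_cases hcase : wRank A (i + 1) (i + K) m ≤ l
      · simp only [if_pos hcase]
        simp only [Finset.mem_coe, Finset.mem_filter]
        exact ⟨hmt, hbm, hcase⟩
      · simp only [if_neg hcase]
        simp only [Finset.mem_coe, Finset.mem_filter]
        rw [wRank_eq, ← ht] at hcase
        push_neg at hcase
        have hpre : Pre A (i + K) m := by
          by_contra hnp
          have := hts_sub m hnp
          omega
        have hKt : i + K ∈ t := by simp only [ht, Finset.mem_Icc]; omega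
        have hlt : rnk A t (i + K) < rnk A t m :=
          rnk_lt_rnk A hmt hpre (by omega)
        have hsucc := hts_succ m
        refine ⟨hKt, by omega, ?_⟩
        rw [wRank_eq, ← ht]; omega
    · intro x hx y hy hxy
      simp only [Finset.coe_filter, hs, Finset.mem_Icc, Set.mem_setOf_eq] at hx hy
      obtain ⟨⟨hxi, hxj⟩, hbx, hxl⟩ := hx
      obtain ⟨⟨hyi, hyj⟩, hby, hyl⟩ := hy
      simp only at hxy
      have hxt : x ∈ t := by simp only [ht, Finset.mem_Icc]; omega
      have hyt : y ∈ t := by simp only [ht, Finset.mem_Icc]; omega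
      by_cases hcx : wRank A (i + 1) (i + K) x ≤ l <;>
        by_cases hcy : wRank A (i + 1) (i + K) y ≤ l
      · simpa [hcx, hcy] using hxy
      · rw [if_pos hcx, if_neg hcy] at hxy; omega
      · rw [if_neg hcx, if_pos hcy] at hxy; omega
      · rw [if_neg hcx, if_neg hcy] at hxy
        rw [wRank_eq, ← ht] at hcx hcy
        have h1 := hts_succ x
        have h2 := hts_succ y
        rw [wRank_eq, ← hs] at hxl hyl
        apply rnk_injOn A hxt hyt
        omega
end

section
/- Fix a sequence A of N integers, a window length K with 1 ≤ K ≤ N, a rank l with 1 ≤ l ≤ K, and any index b. Then |S_{b-cross}| ≤ 2l − 1; in particular |S_{b-cross}| < 2l. -/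
/-- `S_{b-cross}`: the set of indices `1 ≤ i ≤ N-K` at which exactly one of the two
consecutive windows `[i-1,i+K-2]` and `[i,i+K-1]` has `l ∈ Conf_{l,b}`. -/
def crossSet (A : ℕ → ℤ) (N K l b : ℕ) : Finset ℕ :=
  (Finset.Icc 1 (N - K)).filter (fun i =>
    Xor (l ∈ conf A l b (i - 1) (i + K - 2)) (l ∈ conf A l b i (i + K - 1)))

namespace Stmt7Aux

lemma pLe_total (A : ℕ → ℤ) (x y : ℕ) :
    (A x < A y ∨ (A x = A y ∧ x ≤ y)) ∨ (A y < A x ∨ (A y = A x ∧ y ≤ x)) := by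
  rcases lt_trichotomy (A x) (A y) with h | h | h
  · exact Or.inl (Or.inl h)
  · rcases le_total x y with h2 | h2
    · exact Or.inl (Or.inr ⟨h, h2⟩)
    · exact Or.inr (Or.inr ⟨h.symm, h2⟩)
  · exact Or.inr (Or.inl h)

lemma wRank_lt_of (A : ℕ → ℤ) {i j x y : ℕ} (hx : x ∈ Finset.Icc i j) (hy : y ∈ Finset.Icc i j)
    (hxy : A x < A y ∨ (A x = A y ∧ x ≤ y)) (hne : x ≠ y) :
    wRank A i j x < wRank A i j y := by
  apply Finset.card_lt_card
  have hsub : (Finset.Icc i j).filter (fun m' => A m' < A x ∨ (A m' = A x ∧ m' ≤ x))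
      ⊆ (Finset.Icc i j).filter (fun m' => A m' < A y ∨ (A m' = A y ∧ m' ≤ y)) := by
    intro z hz
    simp only [Finset.mem_filter] at hz ⊢
    refine ⟨hz.1, ?_⟩
    rcases hz.2 with h | ⟨e, hle⟩ <;> rcases hxy with h2 | ⟨e2, hle2⟩
    · exact Or.inl (h.trans h2)
    · exact Or.inl (e2 ▸ h)
    · exact Or.inl (e ▸ h2)
    · exact Or.inr ⟨e.trans e2, hle.trans hle2⟩
  rw [Finset.ssubset_iff_of_subset hsub]
  refine ⟨y, Finset.mem_filter.mpr ⟨hy, Or.inr ⟨rfl, le_rfl⟩⟩, fun hc => ?_⟩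
  simp only [Finset.mem_filter] at hc
  rcases hc.2 with h | ⟨e, hle⟩ <;> rcases hxy with h2 | ⟨e2, hle2⟩
  · exact absurd (h.trans h2) (lt_irrefl _)
  · exact absurd (e2 ▸ h) (lt_irrefl _)
  · exact absurd (e ▸ h2) (lt_irrefl _)
  · exact hne (le_antisymm hle2 hle)

lemma wRank_inj (A : ℕ → ℤ) {i j x y : ℕ} (hx : x ∈ Finset.Icc i j) (hy : y ∈ Finset.Icc i j)
    (h : wRank A i j x = wRank A i j y) : x = y := by
  by_contra hne
  rcases pLe_total A x y with hp | hp
  · exact absurd h (Nat.ne_of_lt (wRank_lt_of A hx hy hp hne))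
  · exact absurd h.symm (Nat.ne_of_lt (wRank_lt_of A hy hx hp (Ne.symm hne)))

lemma wRank_pos (A : ℕ → ℤ) {i j m : ℕ} (hm : m ∈ Finset.Icc i j) : 1 ≤ wRank A i j m :=
  Finset.card_pos.mpr ⟨m, Finset.mem_filter.mpr ⟨hm, Or.inr ⟨rfl, le_rfl⟩⟩⟩

lemma wRank_le (A : ℕ → ℤ) (i j m : ℕ) : wRank A i j m ≤ (Finset.Icc i j).card :=
  Finset.card_filter_le _ _

lemma wRank_surj (A : ℕ → ℤ) {i j r : ℕ} (hr1 : 1 ≤ r) (hr2 : r ≤ (Finset.Icc i j).card) :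
    ∃ m ∈ Finset.Icc i j, wRank A i j m = r := by
  have himg : (Finset.Icc i j).image (wRank A i j) = Finset.Icc 1 (Finset.Icc i j).card := by
    apply Finset.eq_of_subset_of_card_le
    · intro v hv
      simp only [Finset.mem_image] at hv
      obtain ⟨m, hm, rfl⟩ := hv
      exact Finset.mem_Icc.mpr ⟨wRank_pos A hm, wRank_le A i j m⟩
    · rw [Finset.card_image_of_injOn (fun x hx y hy h => wRank_inj A hx hy h)]
      simp [Nat.card_Icc]
  have : r ∈ (Finset.Icc i j).image (wRank A i j) := by
    rw [himg]; exact Finset.mem_Icc.mpr ⟨hr1, hr2⟩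
  simpa [Finset.mem_image] using this

lemma sIdx_spec (A : ℕ → ℤ) {i j r : ℕ} (hr1 : 1 ≤ r) (hr2 : r ≤ (Finset.Icc i j).card) :
    ∃ m ∈ Finset.Icc i j, wRank A i j m = r ∧ sIdx A i j r = m ∧
      ∀ m' ∈ Finset.Icc i j, wRank A i j m' = r → m' = m := by
  obtain ⟨m, hm, hrk⟩ := wRank_surj A hr1 hr2
  have huniq : ∀ m' ∈ Finset.Icc i j, wRank A i j m' = r → m' = m := fun m' hm' h =>
    wRank_inj A hm' hm (h.trans hrk.symm)
  have hfilt : (Finset.Icc i j).filter (fun x => wRank A i j x = r) = {m} := by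
    ext x
    simp only [Finset.mem_filter, Finset.mem_singleton]
    constructor
    · rintro ⟨hx, hxr⟩; exact huniq x hx hxr
    · rintro rfl; exact ⟨hm, hrk⟩
  exact ⟨m, hm, hrk, by simp [sIdx, hfilt], huniq⟩

/-- Number of indices `m ∈ [i,j]` with `m ≤ b` whose rank in `[i,j]` is at most `r`. -/
def tct (A : ℕ → ℤ) (b r i j : ℕ) : ℕ :=
  ((Finset.Icc i j).filter (fun m => m ≤ b ∧ wRank A i j m ≤ r)).card

lemma tct_le (A : ℕ → ℤ) (b r i j : ℕ) : tct A b r i j ≤ r := by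
  have h := Finset.card_le_card_of_injOn (wRank A i j)
    (s := (Finset.Icc i j).filter (fun m => m ≤ b ∧ wRank A i j m ≤ r))
    (t := Finset.Icc 1 r)
    (fun m hm => by
      simp only [Finset.mem_coe, Finset.mem_filter] at hm
      exact Finset.mem_Icc.mpr ⟨wRank_pos A hm.1, hm.2.2⟩)
    (fun x hx y hy h => by
      simp only [Finset.coe_filter, Set.mem_setOf_eq] at hx hy
      exact wRank_inj A hx.1 hy.1 h)
  simpa [tct, Nat.card_Icc] using h

lemma count_rank_le (A : ℕ → ℤ) (i j r : ℕ) :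
    ((Finset.Icc i j).filter (fun m => wRank A i j m ≤ r)).card
      = min r (Finset.Icc i j).card := by
  have himg : ((Finset.Icc i j).filter (fun m => wRank A i j m ≤ r)).image (wRank A i j)
      = Finset.Icc 1 (min r (Finset.Icc i j).card) := by
    apply Finset.Subset.antisymm
    · intro v hv
      simp only [Finset.mem_image, Finset.mem_filter] at hv
      obtain ⟨m, ⟨hm, hmr⟩, rfl⟩ := hv
      exact Finset.mem_Icc.mpr ⟨wRank_pos A hm, le_min hmr (wRank_le A i j m)⟩
    · intro v hv
      simp only [Finset.mem_Icc] at hv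
      obtain ⟨m, hm, hrk⟩ := wRank_surj A hv.1 (hv.2.trans (min_le_right _ _))
      simp only [Finset.mem_image, Finset.mem_filter]
      exact ⟨m, ⟨hm, by omega⟩, hrk⟩
  have hinj := Finset.card_image_of_injOn
    (s := (Finset.Icc i j).filter (fun m => wRank A i j m ≤ r)) (f := wRank A i j)
    (fun x hx y hy h => by
      simp only [Finset.coe_filter, Set.mem_setOf_eq] at hx hy
      exact wRank_inj A hx.1 hy.1 h)
  rw [himg] at hinj
  rw [← hinj, Nat.card_Icc]
  omega

lemma conf_even (A : ℕ → ℤ) {l b i j : ℕ} (hl1 : 1 ≤ l) (hl2 : l ≤ (Finset.Icc i j).card) :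
    (l ∈ conf A l b i j ↔ Even (tct A b l i j + tct A b (l-1) i j)) := by
  obtain ⟨m, hm, hrk, hsi, huniq⟩ := sIdx_spec A hl1 hl2
  have hmem : l ∈ conf A l b i j ↔ b < m := by
    simp [conf, Finset.mem_filter, Finset.mem_Icc, hl1, hsi]
  have hsplit : tct A b l i j = tct A b (l-1) i j + (if m ≤ b then 1 else 0) := by
    unfold tct
    have hpred : (Finset.Icc i j).filter (fun x => x ≤ b ∧ wRank A i j x ≤ l)
        = ((Finset.Icc i j).filter
            (fun x => (x ≤ b ∧ wRank A i j x ≤ l - 1) ∨ (x ≤ b ∧ wRank A i j x = l))) := by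
      apply Finset.filter_congr
      intro x _
      constructor
      · rintro ⟨h1, h2⟩
        rcases eq_or_lt_of_le h2 with h3 | h3
        · exact Or.inr ⟨h1, h3⟩
        · exact Or.inl ⟨h1, by omega⟩
      · rintro (⟨h1, h2⟩ | ⟨h1, h2⟩) <;> exact ⟨h1, by omega⟩
    rw [hpred, Finset.filter_or, Finset.card_union_of_disjoint]
    · congr 1
      have heq : (Finset.Icc i j).filter (fun x => x ≤ b ∧ wRank A i j x = l)
          = if m ≤ b then {m} else ∅ := by
        split_ifs with hmb
        · ext x
          simp only [Finset.mem_filter, Finset.mem_singleton]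
          constructor
          · rintro ⟨hx, _, hr⟩; exact huniq x hx hr
          · rintro rfl; exact ⟨hm, hmb, hrk⟩
        · ext x
          simp only [Finset.mem_filter, Finset.notMem_empty, iff_false, not_and]
          rintro hx hxb
          intro hr
          exact hmb ((huniq x hx hr) ▸ hxb)
      rw [heq]
      split_ifs <;> simp
    · rw [Finset.disjoint_left]
      intro x hx1 hx2
      simp only [Finset.mem_filter] at hx1 hx2
      omega
  rw [hmem, hsplit]
  rcases le_or_gt m b with hmb | hmb
  · simp only [if_pos hmb]
    have he : tct A b (l-1) i j + 1 + tct A b (l-1) i j = 2 * tct A b (l-1) i j + 1 := by ring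
    rw [he]
    simp [Nat.even_add_one, parity_simps]
    omega
  · simp only [if_neg (by omega : ¬ m ≤ b)]
    have he : tct A b (l-1) i j + 0 + tct A b (l-1) i j = 2 * tct A b (l-1) i j := by ring
    rw [he]
    simp [hmb, even_two_mul]

/-- rank in the old window `[p,q]` of an element of `[p+1,q]`, split off the left endpoint. -/
lemma rank_left (A : ℕ → ℤ) {p q m : ℕ} (hpq : p ≤ q) (hm : m ∈ Finset.Icc (p+1) q) :
    wRank A p q m = ((Finset.Icc (p+1) q).filter
        (fun x => A x < A m ∨ (A x = A m ∧ x ≤ m))).card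
      + (if A p < A m ∨ (A p = A m ∧ p ≤ m) then 1 else 0) := by
  have hins : Finset.Icc p q = insert p (Finset.Icc (p+1) q) := by
    ext x; simp only [Finset.mem_Icc, Finset.mem_insert]; omega
  unfold wRank
  rw [hins, Finset.filter_insert]
  split_ifs with h
  · rw [Finset.card_insert_of_notMem (by
      simp only [Finset.mem_filter, Finset.mem_Icc]; omega)]
  · simp

/-- rank in the new window `[p+1,q+1]` of an element of `[p+1,q]`, split off the right endpoint. -/
lemma rank_right (A : ℕ → ℤ) {p q m : ℕ} (hm : m ∈ Finset.Icc (p+1) q) :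
    wRank A (p+1) (q+1) m = ((Finset.Icc (p+1) q).filter
        (fun x => A x < A m ∨ (A x = A m ∧ x ≤ m))).card
      + (if A (q+1) < A m ∨ (A (q+1) = A m ∧ q+1 ≤ m) then 1 else 0) := by
  have hpq : p + 1 ≤ q := by
    have := Finset.mem_Icc.mp hm; omega
  have hins : Finset.Icc (p+1) (q+1) = insert (q+1) (Finset.Icc (p+1) q) := by
    ext x; simp only [Finset.mem_Icc, Finset.mem_insert]; omega
  unfold wRank
  rw [hins, Finset.filter_insert]
  split_ifs with h
  · rw [Finset.card_insert_of_notMem (by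
      simp only [Finset.mem_filter, Finset.mem_Icc]; omega)]
  · simp

/-- If an element of the common part has new-rank `≤ r` but old-rank `> r`, then
its old rank is exactly `r+1` and the departing element `p` has old rank `≤ r`. -/
lemma key_rank (A : ℕ → ℤ) {p q r m : ℕ} (hpq : p ≤ q) (hm : m ∈ Finset.Icc (p+1) q)
    (hmr : wRank A (p+1) (q+1) m ≤ r) (h : ¬ wRank A p q m ≤ r) :
    wRank A p q m = r + 1 ∧ wRank A p q p ≤ r := by
  have e1 := rank_left A hpq hm
  have e2 := rank_right A hm
  have hple : A p < A m ∨ (A p = A m ∧ p ≤ m) := by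
    by_contra hc
    rw [if_neg hc] at e1
    split_ifs at e2 <;> omega
  have hrold : wRank A p q m = r + 1 := by
    rw [if_pos hple] at e1
    split_ifs at e2 <;> omega
  simp only [Finset.mem_Icc] at hm
  have hlt : wRank A p q p < wRank A p q m :=
    wRank_lt_of A (Finset.mem_Icc.mpr ⟨le_rfl, hpq⟩)
      (Finset.mem_Icc.mpr ⟨by omega, hm.2⟩) hple (by omega)
  exact ⟨hrold, by omega⟩

lemma tct_mono (A : ℕ → ℤ) (b r : ℕ) {p q : ℕ} (hpq : p ≤ q) :
    tct A b r (p+1) (q+1) ≤ tct A b r p q := by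
  rcases le_or_gt (q+1) b with hb | hb
  · have e1 : tct A b r (p+1) (q+1) = min r (Finset.Icc (p+1) (q+1)).card := by
      unfold tct
      rw [← count_rank_le A (p+1) (q+1) r]
      congr 1
      apply Finset.filter_congr
      intro x hx
      simp only [Finset.mem_Icc] at hx
      simp only [and_iff_right_iff_imp]
      intro _; omega
    have e2 : tct A b r p q = min r (Finset.Icc p q).card := by
      unfold tct
      rw [← count_rank_le A p q r]
      congr 1
      apply Finset.filter_congr
      intro x hx
      simp only [Finset.mem_Icc] at hx
      simp only [and_iff_right_iff_imp]
      intro _; omega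
    rw [e1, e2, Nat.card_Icc, Nat.card_Icc]
    omega
  · unfold tct
    apply Finset.card_le_card_of_injOn (fun m => if wRank A p q m ≤ r then m else p)
    · intro m hm
      simp only [Finset.mem_coe, Finset.mem_filter, Finset.mem_Icc] at hm
      obtain ⟨⟨hm1, hm2⟩, hmb, hmr⟩ := hm
      have hmIcc : m ∈ Finset.Icc (p+1) q := Finset.mem_Icc.mpr ⟨hm1, by omega⟩
      by_cases h : wRank A p q m ≤ r
      · simp only [if_pos h, Finset.mem_coe, Finset.mem_filter, Finset.mem_Icc]
        exact ⟨⟨by omega, by omega⟩, hmb, h⟩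
      · simp only [if_neg h, Finset.mem_coe, Finset.mem_filter, Finset.mem_Icc]
        obtain ⟨_, hp⟩ := key_rank A hpq hmIcc hmr h
        exact ⟨⟨le_rfl, hpq⟩, by omega, hp⟩
    · intro x hx y hy hxy
      simp only [Finset.coe_filter, Finset.mem_Icc, Set.mem_setOf_eq] at hx hy
      obtain ⟨⟨hx1, hx2⟩, hxb, hxr⟩ := hx
      obtain ⟨⟨hy1, hy2⟩, hyb, hyr⟩ := hy
      have hxIcc : x ∈ Finset.Icc (p+1) q := Finset.mem_Icc.mpr ⟨hx1, by omega⟩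
      have hyIcc : y ∈ Finset.Icc (p+1) q := Finset.mem_Icc.mpr ⟨hy1, by omega⟩
      by_cases h1 : wRank A p q x ≤ r <;> by_cases h2 : wRank A p q y ≤ r
      · simpa [h1, h2] using hxy
      · exfalso
        simp only [if_pos h1, if_neg h2] at hxy
        omega
      · exfalso
        simp only [if_neg h1, if_pos h2] at hxy
        omega
      · simp only [if_neg h1, if_neg h2] at hxy
        obtain ⟨ex, _⟩ := key_rank A hpq hxIcc hxr h1
        obtain ⟨ey, _⟩ := key_rank A hpq hyIcc hyr h2
        have hxq : x ∈ Finset.Icc p q := Finset.mem_Icc.mpr ⟨by omega, by omega⟩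
        have hyq : y ∈ Finset.Icc p q := Finset.mem_Icc.mpr ⟨by omega, by omega⟩
        exact wRank_inj A hxq hyq (ex.trans ey.symm)

end Stmt7Aux

open Stmt7Aux in
/-- The rank-`l` element crosses the boundary `b / b+1` at most `2l - 1 < 2l` times. -/
theorem stmt_7 (N K l b : ℕ) (A : ℕ → ℤ) (hK : 1 ≤ K) (hKN : K ≤ N)
    (hl : 1 ≤ l) (hlK : l ≤ K) :
    (crossSet A N K l b).card ≤ 2 * l - 1 ∧ (crossSet A N K l b).card < 2 * l := by
  classical
  set k := K - 1 with hk
  set g : ℕ → ℕ := fun s => tct A b l s (s + k) + tct A b (l-1) s (s + k) with hg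
  have hcard : ∀ s : ℕ, (Finset.Icc s (s+k)).card = K := by
    intro s; rw [Nat.card_Icc]; omega
  have hmono : ∀ s, g (s+1) ≤ g s := by
    intro s
    have e : s + 1 + k = s + k + 1 := by omega
    simp only [hg, e]
    exact Nat.add_le_add (tct_mono A b l (by omega)) (tct_mono A b (l-1) (by omega))
  have hcross : ∀ n, (n+1) ∈ crossSet A N K l b → g (n+1) < g n := by
    intro n hn
    simp only [crossSet, Finset.mem_filter, Finset.mem_Icc] at hn
    obtain ⟨⟨hn1, hn2⟩, hx⟩ := hn
    have e1 : n + 1 - 1 = n := by omega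
    have e2 : n + 1 + K - 2 = n + k := by omega
    have e3 : n + 1 + K - 1 = (n+1) + k := by omega
    rw [e1, e2, e3] at hx
    have hev1 : (l ∈ conf A l b n (n+k)) ↔ Even (g n) :=
      conf_even A hl (by rw [hcard]; exact hlK)
    have hev2 : (l ∈ conf A l b (n+1) ((n+1)+k)) ↔ Even (g (n+1)) :=
      conf_even A hl (by rw [hcard]; exact hlK)
    have hne : g (n+1) ≠ g n := by
      intro he
      rw [hev1] at hx
      rw [hev2, he] at hx
      rcases hx with ⟨h1, h2⟩ | ⟨h1, h2⟩ <;> exact h2 h1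
    exact lt_of_le_of_ne (hmono n) hne
  have hg0 : g 0 ≤ 2 * l - 1 := by
    have h1 := tct_le A b l 0 (0+k)
    have h2 := tct_le A b (l-1) 0 (0+k)
    simp only [hg]
    omega
  have key : ∀ n, ((crossSet A N K l b).filter (fun x => x ≤ n)).card + g n ≤ g 0 := by
    intro n
    induction n with
    | zero =>
      have hemp : (crossSet A N K l b).filter (fun x => x ≤ 0) = ∅ := by
        rw [Finset.filter_eq_empty_iff]
        intro x hx
        simp only [crossSet, Finset.mem_filter, Finset.mem_Icc] at hx
        omega
      rw [hemp]
      simp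
    | succ n ih =>
      have hsub : (crossSet A N K l b).filter (fun x => x ≤ n + 1)
          ⊆ ((crossSet A N K l b).filter (fun x => x ≤ n)) ∪ {n+1} := by
        intro x hx
        simp only [Finset.mem_filter, Finset.mem_union, Finset.mem_singleton] at hx ⊢
        obtain ⟨h1, h2⟩ := hx
        rcases eq_or_lt_of_le h2 with h | h
        · exact Or.inr h
        · exact Or.inl ⟨h1, by omega⟩
      by_cases hmem : (n+1) ∈ crossSet A N K l b
      · have hle : ((crossSet A N K l b).filter (fun x => x ≤ n + 1)).card
            ≤ ((crossSet A N K l b).filter (fun x => x ≤ n)).card + 1 := by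
          calc _ ≤ (((crossSet A N K l b).filter (fun x => x ≤ n)) ∪ {n+1}).card :=
                Finset.card_le_card hsub
            _ ≤ _ := by
                have := Finset.card_union_le
                  ((crossSet A N K l b).filter (fun x => x ≤ n)) ({n+1} : Finset ℕ)
                simpa using this
        have := hcross n hmem
        omega
      · have heq : (crossSet A N K l b).filter (fun x => x ≤ n + 1)
            = (crossSet A N K l b).filter (fun x => x ≤ n) := by
          apply Finset.filter_congr
          intro x hx
          constructor
          · intro h
            rcases Nat.lt_or_ge x (n+1) with h2 | h2
            · omega
            · exfalso; have hxe : x = n + 1 := by omega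
              exact hmem (hxe ▸ hx)
          · intro h; omega
        rw [heq]
        have := hmono n
        omega
  have hall : crossSet A N K l b = (crossSet A N K l b).filter (fun x => x ≤ N - K) := by
    symm
    apply Finset.filter_true_of_mem
    intro x hx
    simp only [crossSet, Finset.mem_filter, Finset.mem_Icc] at hx
    omega
  have hfin := key (N - K)
  rw [← hall] at hfin
  constructor <;> omega
end

section
/- Fix a sequence A of N integers, a window length K with 1 ≤ K ≤ N, a rank l with 1 ≤ l ≤ K, and any index b. Suppose 0 ≤ i₁ ≤ i₂ ≤ N−K and g_b(i₁) = g_b(i₂). Then for every i' with i₁ ≤ i' ≤ i₂, both |Conf_{l,b}([i', i'+K−1])| = |Conf_{l,b}([i₁, i₁+K−1])| and |Conf_{l−1,b}([i', i'+K−1])| = |Conf_{l−1,b}([i₁, i₁+K−1])|. -/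
/-- `g_b(i) = |Conf_{l,b}([i,i+K-1])| + |Conf_{l-1,b}([i,i+K-1])|`. -/
def gfun (A : ℕ → ℤ) (K l b i : ℕ) : ℕ :=
  (conf A l b i (i + K - 1)).card + (conf A (l - 1) b i (i + K - 1)).card

namespace Stmt8Aux

lemma wRank_pos (A : ℕ → ℤ) {i j m : ℕ} (hm : m ∈ Finset.Icc i j) :
    1 ≤ wRank A i j m := by
  apply Finset.card_pos.mpr
  exact ⟨m, by simp [hm]⟩

lemma wRank_le (A : ℕ → ℤ) {i j m : ℕ} : wRank A i j m ≤ j + 1 - i := by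
  calc wRank A i j m ≤ (Finset.Icc i j).card := Finset.card_filter_le _ _
  _ = j + 1 - i := Nat.card_Icc i j

lemma wRank_lt_wRank (A : ℕ → ℤ) {i j m m' : ℕ} (hm : m ∈ Finset.Icc i j)
    (hm' : m' ∈ Finset.Icc i j)
    (h : A m < A m' ∨ (A m = A m' ∧ m < m')) :
    wRank A i j m < wRank A i j m' := by
  apply Finset.card_lt_card
  constructor
  · intro x hx
    simp only [Finset.mem_filter] at hx ⊢
    refine ⟨hx.1, ?_⟩
    rcases h with h | ⟨he, hlt⟩
    · rcases hx.2 with h1 | ⟨h1, h2⟩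
      · exact Or.inl (h1.trans h)
      · exact Or.inl (h1 ▸ h)
    · rcases hx.2 with h1 | ⟨h1, h2⟩
      · exact Or.inl (he ▸ h1)
      · exact Or.inr ⟨h1.trans he, h2.trans hlt.le⟩
  · intro hsub
    have hmem : m' ∈ (Finset.Icc i j).filter
        (fun x => A x < A m' ∨ (A x = A m' ∧ x ≤ m')) := by simp [hm']
    have h2 := hsub hmem
    simp only [Finset.mem_filter] at h2
    rcases h with h | ⟨he, hlt⟩
    · rcases h2.2 with h1 | ⟨h1, _⟩
      · omega
      · omega
    · rcases h2.2 with h1 | ⟨h1, h3⟩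
      · omega
      · omega

lemma wRank_injOn (A : ℕ → ℤ) {i j m m' : ℕ} (hm : m ∈ Finset.Icc i j)
    (hm' : m' ∈ Finset.Icc i j) (h : wRank A i j m = wRank A i j m') : m = m' := by
  by_contra hne
  rcases lt_trichotomy (A m) (A m') with hA | hA | hA
  · exact absurd h (Nat.ne_of_lt (wRank_lt_wRank A hm hm' (Or.inl hA)))
  · rcases Nat.lt_or_ge m m' with hmm | hmm
    · exact absurd h (Nat.ne_of_lt (wRank_lt_wRank A hm hm' (Or.inr ⟨hA, hmm⟩)))
    · have hmm' : m' < m := by omega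
      exact absurd h.symm
        (Nat.ne_of_lt (wRank_lt_wRank A hm' hm (Or.inr ⟨hA.symm, hmm'⟩)))
  · exact absurd h.symm (Nat.ne_of_lt (wRank_lt_wRank A hm' hm (Or.inl hA)))

lemma wRank_surj (A : ℕ → ℤ) {i j r : ℕ} (hij : i ≤ j)
    (hr1 : 1 ≤ r) (hr2 : r ≤ j + 1 - i) :
    ∃ m ∈ Finset.Icc i j, wRank A i j m = r := by
  have himg : (Finset.Icc i j).image (wRank A i j) = Finset.Icc 1 (j + 1 - i) := by
    apply Finset.eq_of_subset_of_card_le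
    · intro x hx
      simp only [Finset.mem_image] at hx
      obtain ⟨m, hm, rfl⟩ := hx
      exact Finset.mem_Icc.mpr ⟨wRank_pos A hm, wRank_le A⟩
    · rw [Finset.card_image_of_injOn (fun a ha c hc h =>
        wRank_injOn A (Finset.mem_coe.mp ha) (Finset.mem_coe.mp hc) h)]
      rw [Nat.card_Icc, Nat.card_Icc]
      omega
  have : r ∈ (Finset.Icc i j).image (wRank A i j) := by
    rw [himg]; exact Finset.mem_Icc.mpr ⟨hr1, hr2⟩
  simpa only [Finset.mem_image] using this

lemma sIdx_eq (A : ℕ → ℤ) {i j m : ℕ} (hm : m ∈ Finset.Icc i j) :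
    sIdx A i j (wRank A i j m) = m := by
  have hs : (Finset.Icc i j).filter (fun x => wRank A i j x = wRank A i j m) = {m} := by
    ext x
    simp only [Finset.mem_filter, Finset.mem_singleton]
    constructor
    · rintro ⟨hx, he⟩; exact wRank_injOn A hx hm he
    · rintro rfl; exact ⟨hm, rfl⟩
  rw [sIdx, hs]; simp

lemma sIdx_spec (A : ℕ → ℤ) {i j r : ℕ} (hij : i ≤ j)
    (hr1 : 1 ≤ r) (hr2 : r ≤ j + 1 - i) :
    sIdx A i j r ∈ Finset.Icc i j ∧ wRank A i j (sIdx A i j r) = r := by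
  obtain ⟨m, hm, he⟩ := wRank_surj A hij hr1 hr2
  have hsm : sIdx A i j r = m := by rw [← he, sIdx_eq A hm]
  rw [hsm]; exact ⟨hm, he⟩

lemma conf_card (A : ℕ → ℤ) {l b i j : ℕ} (hij : i ≤ j) (hl : l ≤ j + 1 - i) :
    (conf A l b i j).card =
      ((Finset.Icc i j).filter (fun m => b < m ∧ wRank A i j m ≤ l)).card := by
  apply Finset.card_bij (fun r _ => sIdx A i j r)
  · intro r hr
    simp only [conf, Finset.mem_filter, Finset.mem_Icc] at hr
    obtain ⟨⟨hr1, hr2⟩, hb⟩ := hr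
    obtain ⟨hmem, hrank⟩ := sIdx_spec A hij hr1 (hr2.trans hl)
    simp only [Finset.mem_filter]
    exact ⟨hmem, hb, by omega⟩
  · intro r₁ hr₁ r₂ hr₂ h
    simp only [conf, Finset.mem_filter, Finset.mem_Icc] at hr₁ hr₂
    have h1 := (sIdx_spec A hij hr₁.1.1 (hr₁.1.2.trans hl)).2
    have h2 := (sIdx_spec A hij hr₂.1.1 (hr₂.1.2.trans hl)).2
    rw [← h1, ← h2, h]
  · intro m hm
    simp only [Finset.mem_filter] at hm
    obtain ⟨hmem, hb, hrle⟩ := hm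
    refine ⟨wRank A i j m, ?_, sIdx_eq A hmem⟩
    simp only [conf, Finset.mem_filter, Finset.mem_Icc]
    exact ⟨⟨wRank_pos A hmem, hrle⟩, by rw [sIdx_eq A hmem]; exact hb⟩

lemma wRank_shift (A : ℕ → ℤ) {i K m : ℕ} (hK : 1 ≤ K)
    (hm : m ∈ Finset.Icc (i + 1) (i + K - 1)) :
    wRank A (i + 1) (i + K) m + (if A i ≤ A m then 1 else 0)
      = wRank A i (i + K - 1) m + (if A (i + K) < A m then 1 else 0) := by
  simp only [Finset.mem_Icc] at hm
  have e1 : Finset.Icc i (i + K - 1) = insert i (Finset.Icc (i + 1) (i + K - 1)) := by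
    ext x; simp only [Finset.mem_Icc, Finset.mem_insert]; omega
  have e2 : Finset.Icc (i + 1) (i + K) = insert (i + K) (Finset.Icc (i + 1) (i + K - 1)) := by
    ext x; simp only [Finset.mem_Icc, Finset.mem_insert]; omega
  have hi : i ∉ Finset.Icc (i + 1) (i + K - 1) := by simp
  have hiK : i + K ∉ Finset.Icc (i + 1) (i + K - 1) := by simp; omega
  rw [wRank, wRank, e1, e2, Finset.filter_insert, Finset.filter_insert]
  have hPi : (A i < A m ∨ (A i = A m ∧ i ≤ m)) ↔ A i ≤ A m := by
    constructor
    · rintro (h | ⟨h, _⟩) <;> omega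
    · intro h; rcases lt_or_eq_of_le h with h | h
      · exact Or.inl h
      · exact Or.inr ⟨h, by omega⟩
  have hPiK : (A (i + K) < A m ∨ (A (i + K) = A m ∧ i + K ≤ m)) ↔ A (i + K) < A m := by
    constructor
    · rintro (h | ⟨_, h⟩)
      · exact h
      · omega
    · exact Or.inl
  simp only [hPi, hPiK]
  by_cases h1 : A i ≤ A m <;> by_cases h2 : A (i + K) < A m <;>
    simp [h1, h2, Finset.card_insert_of_notMem, hi, hiK]

lemma bad_elim (A : ℕ → ℤ) {i K l m : ℕ} (hK : 1 ≤ K)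
    (hm : m ∈ Finset.Icc (i + 1) (i + K - 1))
    (hr : wRank A i (i + K - 1) m ≤ l)
    (hr' : l < wRank A (i + 1) (i + K) m) :
    wRank A i (i + K - 1) m = l ∧ A (i + K) < A m := by
  have hs := wRank_shift A hK hm
  by_cases h1 : A i ≤ A m <;> by_cases h2 : A (i + K) < A m <;>
    simp only [h1, h2, if_pos, if_neg, if_true, if_false, not_false_iff] at hs <;>
    first
      | exact ⟨by omega, h2⟩
      | omega

/-- one-step monotonicity of the conf-card in the window start. -/
lemma conf_step (A : ℕ → ℤ) (K l b : ℕ) (hK : 1 ≤ K) (hl : l ≤ K) (i : ℕ) :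
    (conf A l b i (i + K - 1)).card ≤ (conf A l b (i + 1) (i + 1 + K - 1)).card := by
  have hij : i ≤ i + K - 1 := by omega
  have hij' : i + 1 ≤ i + 1 + K - 1 := by omega
  have hK1 : i + K - 1 + 1 - i = K := by omega
  have hK2 : i + 1 + K - 1 + 1 - (i + 1) = K := by omega
  have e3 : i + 1 + K - 1 = i + K := by omega
  by_cases hb : b < i
  · -- every witness index is ≥ i > b, so both confs are all of Icc 1 l
    have hall : ∀ (a j : ℕ), a ≤ j → l ≤ j + 1 - a → b < a →
        conf A l b a j = Finset.Icc 1 l := by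
      intro a j haj hlj hba
      apply Finset.filter_true_of_mem
      intro r hr
      simp only [Finset.mem_Icc] at hr
      have := (sIdx_spec A haj hr.1 (hr.2.trans hlj)).1
      simp only [Finset.mem_Icc] at this
      omega
    rw [hall i (i + K - 1) hij (by omega) hb,
        hall (i + 1) (i + 1 + K - 1) hij' (by omega) (by omega)]
  · push_neg at hb
    rw [conf_card A hij (by omega), conf_card A hij' (by omega), e3]
    apply Finset.card_le_card_of_injOn
      (fun m => if wRank A (i + 1) (i + K) m ≤ l then m else i + K)
    · -- maps to
      intro m hm
      simp only [Finset.mem_coe, Finset.mem_filter, Finset.mem_Icc] at hm ⊢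
      obtain ⟨⟨hm1, hm2⟩, hbm, hrk⟩ := hm
      have hmW' : m ∈ Finset.Icc (i + 1) (i + K - 1) := by
        simp only [Finset.mem_Icc]; omega
      by_cases hg : wRank A (i + 1) (i + K) m ≤ l
      · rw [if_pos hg]
        exact ⟨⟨by omega, by omega⟩, hbm, hg⟩
      · rw [if_neg hg]
        push_neg at hg
        obtain ⟨hrl, hAlt⟩ := bad_elim A hK hmW' hrk hg
        refine ⟨⟨by omega, le_refl _⟩, by omega, ?_⟩
        have hlt : wRank A (i + 1) (i + K) (i + K) < wRank A (i + 1) (i + K) m := by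
          apply wRank_lt_wRank A _ _ (Or.inl hAlt)
          · simp only [Finset.mem_Icc]; omega
          · simp only [Finset.mem_Icc]; omega
        have hub : wRank A (i + 1) (i + K) m ≤ l + 1 := by
          have hs := wRank_shift A hK hmW'
          by_cases h1 : A i ≤ A m <;> by_cases h2 : A (i + K) < A m <;>
            simp only [h1, h2, if_pos, if_neg, if_true, if_false, not_false_iff] at hs <;>
            omega
        omega
    · -- injective on
      intro m₁ hm₁ m₂ hm₂ he
      simp only at he
      simp only [Finset.mem_coe, Finset.mem_filter, Finset.mem_Icc] at hm₁ hm₂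
      obtain ⟨⟨h11, h12⟩, h1b, h1r⟩ := hm₁
      obtain ⟨⟨h21, h22⟩, h2b, h2r⟩ := hm₂
      have hmW1 : m₁ ∈ Finset.Icc (i + 1) (i + K - 1) := by
        simp only [Finset.mem_Icc]; omega
      have hmW2 : m₂ ∈ Finset.Icc (i + 1) (i + K - 1) := by
        simp only [Finset.mem_Icc]; omega
      by_cases g1 : wRank A (i + 1) (i + K) m₁ ≤ l <;>
        by_cases g2 : wRank A (i + 1) (i + K) m₂ ≤ l
      · rwa [if_pos g1, if_pos g2] at he
      · rw [if_pos g1, if_neg g2] at he; omega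
      · rw [if_neg g1, if_pos g2] at he; omega
      · push_neg at g1 g2
        have b1 := (bad_elim A hK hmW1 h1r g1).1
        have b2 := (bad_elim A hK hmW2 h2r g2).1
        have hmV1 : m₁ ∈ Finset.Icc i (i + K - 1) := by
          simp only [Finset.mem_Icc]; omega
        have hmV2 : m₂ ∈ Finset.Icc i (i + K - 1) := by
          simp only [Finset.mem_Icc]; omega
        exact wRank_injOn A hmV1 hmV2 (by rw [b1, b2])

lemma conf_mono (A : ℕ → ℤ) (K l b : ℕ) (hK : 1 ≤ K) (hl : l ≤ K) :
    ∀ a c : ℕ, a ≤ c →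
      (conf A l b a (a + K - 1)).card ≤ (conf A l b c (c + K - 1)).card := by
  intro a c hac
  induction c with
  | zero =>
    have ha : a = 0 := Nat.le_zero.mp hac
    subst ha
    exact le_refl _
  | succ n ih =>
    rcases Nat.lt_or_ge a (n + 1) with h | h
    · exact (ih (by omega)).trans (conf_step A K l b hK hl n)
    · have : a = n + 1 := by omega
      subst this; exact le_refl _

end Stmt8Aux

/-- If `g_b(i₁) = g_b(i₂)` then both configuration sizes are constant on `[i₁,i₂]`. -/
theorem stmt_8 (N K l b : ℕ) (A : ℕ → ℤ) (hK : 1 ≤ K) (hKN : K ≤ N)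
    (hl : 1 ≤ l) (hlK : l ≤ K) (i₁ i₂ : ℕ) (h12 : i₁ ≤ i₂) (h2 : i₂ ≤ N - K)
    (hg : gfun A K l b i₁ = gfun A K l b i₂) :
    ∀ i' : ℕ, i₁ ≤ i' → i' ≤ i₂ →
      (conf A l b i' (i' + K - 1)).card = (conf A l b i₁ (i₁ + K - 1)).card ∧
      (conf A (l - 1) b i' (i' + K - 1)).card =
        (conf A (l - 1) b i₁ (i₁ + K - 1)).card := by
  intro i' h1' h2'
  have M := Stmt8Aux.conf_mono A K l b hK hlK
  have M' := Stmt8Aux.conf_mono A K (l - 1) b hK (by omega)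
  have a1 := M i₁ i' h1'
  have a2 := M i' i₂ h2'
  have a3 := M' i₁ i' h1'
  have a4 := M' i' i₂ h2'
  simp only [gfun] at hg
  omega
end

section
/- Fix a sequence A of N integers, a window length K with 1 ≤ K ≤ N, a rank l with 1 ≤ l ≤ K, and any index b. Suppose 0 ≤ i₁ ≤ i₂ ≤ N−K and g_b(i₁) = g_b(i₂). Then for every i' with i₁ ≤ i' ≤ i₂, the rank-l index stays on the same side of b: s_l([i', i'+K−1]) > b if and only if s_l([i₁, i₁+K−1]) > b. -/
open Finset

section Aux
variable (A : ℕ → ℤ)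

/-- lexicographic key comparison -/
def kle (m' m : ℕ) : Prop := A m' < A m ∨ (A m' = A m ∧ m' ≤ m)

instance kle.dec (m : ℕ) : DecidablePred (fun m' => kle A m' m) := fun m' => by
  unfold kle; infer_instance

lemma kle_refl (m : ℕ) : kle A m m := Or.inr ⟨rfl, le_refl m⟩

lemma kle_total (m m' : ℕ) : kle A m m' ∨ kle A m' m := by unfold kle; omega

variable {A}

lemma kle_trans {a b c : ℕ} (h1 : kle A a b) (h2 : kle A b c) : kle A a c := by
  unfold kle at *; omega

lemma kle_antisymm {a b : ℕ} (h1 : kle A a b) (h2 : kle A b a) : a = b := by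
  unfold kle at *; omega

variable (A) in
/-- rank of `m` within finset `s` -/
def rk (s : Finset ℕ) (m : ℕ) : ℕ := (s.filter (fun m' => kle A m' m)).card

lemma rk_pos {s : Finset ℕ} {m : ℕ} (hm : m ∈ s) : 1 ≤ rk A s m :=
  card_pos.mpr ⟨m, mem_filter.mpr ⟨hm, kle_refl A m⟩⟩

lemma rk_le_card (s : Finset ℕ) (m : ℕ) : rk A s m ≤ s.card := card_filter_le _ _

lemma rk_lt_rk {s : Finset ℕ} {m m' : ℕ} (hm' : m' ∈ s) (h : kle A m m') (hne : m ≠ m') :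
    rk A s m < rk A s m' := by
  apply card_lt_card
  constructor
  · intro x hx
    rcases mem_filter.mp hx with ⟨hxs, hxk⟩
    exact mem_filter.mpr ⟨hxs, kle_trans hxk h⟩
  · intro hsub
    have hm'mem : m' ∈ s.filter (fun m'' => kle A m'' m') := mem_filter.mpr ⟨hm', kle_refl A m'⟩
    have := mem_filter.mp (hsub hm'mem)
    exact hne (kle_antisymm h this.2)

lemma rk_inj {s : Finset ℕ} {m m' : ℕ} (hm : m ∈ s) (hm' : m' ∈ s)
    (h : rk A s m = rk A s m') : m = m' := by
  by_contra hne
  rcases kle_total A m m' with hk | hk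
  · exact absurd h (Nat.ne_of_lt (rk_lt_rk hm' hk hne))
  · exact absurd h.symm (Nat.ne_of_lt (rk_lt_rk hm hk (Ne.symm hne)))

lemma kle_of_rk_lt {s : Finset ℕ} {m m' : ℕ} (hm : m ∈ s) (hm' : m' ∈ s)
    (h : rk A s m < rk A s m') : kle A m m' := by
  rcases kle_total A m m' with hk | hk
  · exact hk
  · rcases eq_or_ne m' m with rfl | hne
    · exact hk
    · exact absurd (rk_lt_rk hm hk hne) (by omega)

lemma rk_surj {s : Finset ℕ} {r : ℕ} (h1 : 1 ≤ r) (h2 : r ≤ s.card) :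
    ∃ m ∈ s, rk A s m = r := by
  have := Finset.surj_on_of_inj_on_of_card_le (s := s) (t := Finset.Icc 1 s.card)
    (fun a _ => rk A s a)
    (fun a ha => mem_Icc.mpr ⟨rk_pos ha, rk_le_card s a⟩)
    (fun a₁ a₂ ha₁ ha₂ h => rk_inj ha₁ ha₂ h)
    (by rw [Nat.card_Icc]; omega)
  obtain ⟨a, ha, hr⟩ := this r (mem_Icc.mpr ⟨h1, h2⟩)
  exact ⟨a, ha, hr.symm⟩

lemma rk_insert {a : ℕ} {s : Finset ℕ} (ha : a ∉ s) (m : ℕ) :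
    rk A (insert a s) m = rk A s m + if kle A a m then 1 else 0 := by
  unfold rk
  rw [filter_insert]
  split
  · rw [card_insert_of_notMem (fun h => ha (mem_filter.mp h).1)]
  · simp

end Aux

section Top
open Finset
variable (A : ℕ → ℤ)

/-- the set of indices of the `l` smallest elements of `s` -/
def topl (s : Finset ℕ) (l : ℕ) : Finset ℕ := s.filter (fun m => rk A s m ≤ l)

variable {A}

lemma card_topl {s : Finset ℕ} {l : ℕ} (hl : l ≤ s.card) : (topl A s l).card = l := by
  have : (topl A s l).card = (Finset.Icc 1 l).card := by
    apply Finset.card_bij (fun m _ => rk A s m)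
    · intro m hm
      rcases mem_filter.mp hm with ⟨hms, hml⟩
      exact mem_Icc.mpr ⟨rk_pos hms, hml⟩
    · intro m₁ hm₁ m₂ hm₂ h
      exact rk_inj (mem_filter.mp hm₁).1 (mem_filter.mp hm₂).1 h
    · intro r hr
      rcases mem_Icc.mp hr with ⟨h1, h2⟩
      obtain ⟨m, hms, hmr⟩ := rk_surj (A := A) h1 (le_trans h2 hl)
      exact ⟨m, mem_filter.mpr ⟨hms, by omega⟩, hmr⟩
  rw [this, Nat.card_Icc]; omega

/-- Exchange: any element entering the top-`l` set when the window slides has a larger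
index than any element leaving it. -/
lemma leave_lt_enter {C : Finset ℕ} {x y l : ℕ} (hx : x ∉ C) (hy : y ∉ C) (hxy : x < y)
    (hC1 : ∀ m ∈ C, x < m) (hC2 : ∀ m ∈ C, m < y) :
    ∀ m₀ ∈ topl A (insert y C) l \ topl A (insert x C) l,
    ∀ m₁ ∈ topl A (insert x C) l \ topl A (insert y C) l, m₁ < m₀ := by
  intro m₀ hm₀ m₁ hm₁
  rcases mem_sdiff.mp hm₀ with ⟨hm₀T', hm₀T⟩
  rcases mem_sdiff.mp hm₁ with ⟨hm₁T, hm₁T'⟩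
  rcases mem_filter.mp hm₀T' with ⟨hm₀W', hm₀r⟩
  rcases mem_filter.mp hm₁T with ⟨hm₁W, hm₁r⟩
  rcases mem_insert.mp hm₀W' with rfl | hm₀C
  · -- m₀ = y
    rcases mem_insert.mp hm₁W with rfl | hm₁C
    · exact hxy
    · exact hC2 _ hm₁C
  · rcases mem_insert.mp hm₁W with rfl | hm₁C
    · exact hC1 _ hm₀C
    · -- both in C : contradiction
      exfalso
      have hm₀W : m₀ ∈ insert x C := mem_insert_of_mem hm₀C
      have hm₁W' : m₁ ∈ insert y C := mem_insert_of_mem hm₁C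
      have h₀ : l < rk A (insert x C) m₀ := by
        by_contra h
        exact hm₀T (mem_filter.mpr ⟨hm₀W, by omega⟩)
      have h₁ : l < rk A (insert y C) m₁ := by
        by_contra h
        exact hm₁T' (mem_filter.mpr ⟨hm₁W', by omega⟩)
      have k1 : kle A m₁ m₀ := kle_of_rk_lt hm₁W hm₀W (by omega)
      have k2 : kle A m₀ m₁ := kle_of_rk_lt hm₀W' hm₁W' (by omega)
      have : m₀ = m₁ := kle_antisymm k2 k1
      subst this
      omega

/-- key step: the count of top-`l` indices exceeding `b` does not decrease
when the window slides one step to the right. -/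
lemma step_count {C : Finset ℕ} {x y l b : ℕ} (hx : x ∉ C) (hy : y ∉ C) (hxy : x < y)
    (hC1 : ∀ m ∈ C, x < m) (hC2 : ∀ m ∈ C, m < y) (hl : l ≤ C.card + 1) :
    ((topl A (insert x C) l).filter (fun m => b < m)).card ≤
    ((topl A (insert y C) l).filter (fun m => b < m)).card := by
  set T := topl A (insert x C) l with hT
  set T' := topl A (insert y C) l with hT'
  have hTc : T.card = l := card_topl (by rw [card_insert_of_notMem hx]; omega)
  have hT'c : T'.card = l := card_topl (by rw [card_insert_of_notMem hy]; omega)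
  have hsplit : ∀ s t : Finset ℕ,
      (s.filter (fun m => b < m)).card
        = ((s \ t).filter (fun m => b < m)).card + ((s ∩ t).filter (fun m => b < m)).card := by
    intro s t
    rw [← card_union_of_disjoint (disjoint_filter_filter (disjoint_sdiff_inter s t)),
      ← filter_union, sdiff_union_inter]
  rw [hsplit T T', hsplit T' T, inter_comm]
  have hkk : (T \ T').card = (T' \ T).card := by
    have h1 := card_sdiff_add_card_inter T T'
    have h2 := card_sdiff_add_card_inter T' T
    rw [inter_comm] at h2
    omega
  have hkey : ((T \ T').filter (fun m => b < m)).card ≤ ((T' \ T).filter (fun m => b < m)).card := by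
    by_cases hne : ∃ m₁ ∈ T \ T', b < m₁
    · obtain ⟨m₁, hm₁, hbm₁⟩ := hne
      have : (T' \ T).filter (fun m => b < m) = T' \ T := by
        apply filter_eq_self.mpr
        intro m₀ hm₀
        have := leave_lt_enter hx hy hxy hC1 hC2 m₀ hm₀ m₁ hm₁
        omega
      rw [this, ← hkk]
      exact card_filter_le _ _
    · push_neg at hne
      have : (T \ T').filter (fun m => b < m) = ∅ := by
        apply filter_eq_empty_iff.mpr
        intro m hm
        have := hne m hm
        omega
      simp [this]
  omega

end Top


section Defs
open Finset

variable {A : ℕ → ℤ}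

lemma wRank_eq (i j m : ℕ) : wRank A i j m = rk A (Finset.Icc i j) m := by
  unfold wRank rk kle
  congr

/-- the window count of top-`l` indices exceeding `b` -/
def cW (A : ℕ → ℤ) (K l b i : ℕ) : ℕ :=
  ((topl A (Finset.Icc i (i + K - 1)) l).filter (fun m => b < m)).card

lemma cW_step {K l : ℕ} (hK : 1 ≤ K) (hlK : l ≤ K) (b i : ℕ) :
    cW A K l b i ≤ cW A K l b (i + 1) := by
  unfold cW
  have hW : Finset.Icc i (i + K - 1) = insert i (Finset.Icc (i+1) (i + K - 1)) := by
    ext m; simp only [mem_Icc, mem_insert]; omega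
  have hW' : Finset.Icc (i+1) (i + 1 + K - 1) = insert (i + K) (Finset.Icc (i+1) (i + K - 1)) := by
    ext m; simp only [mem_Icc, mem_insert]; omega
  rw [hW, hW']
  apply step_count (by simp) (by simp; omega) (by omega)
    (fun m hm => by simp only [mem_Icc] at hm; omega)
    (fun m hm => by simp only [mem_Icc] at hm; omega)
  rw [Nat.card_Icc]; omega

lemma cW_mono {K l : ℕ} (hK : 1 ≤ K) (hlK : l ≤ K) (b : ℕ) {i i' : ℕ} (h : i ≤ i') :
    cW A K l b i ≤ cW A K l b i' := by
  induction i', h using Nat.le_induction with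
  | base => exact le_refl _
  | succ n hn ih => exact le_trans ih (cW_step hK hlK b n)

lemma sIdx_spec {i j r : ℕ} (h1 : 1 ≤ r) (h2 : r ≤ (Finset.Icc i j).card) :
    sIdx A i j r ∈ Finset.Icc i j ∧ rk A (Finset.Icc i j) (sIdx A i j r) = r := by
  obtain ⟨m, hms, hmr⟩ := rk_surj (A := A) h1 h2
  have hset : (Finset.Icc i j).filter (fun m' => wRank A i j m' = r) = {m} := by
    ext x
    simp only [mem_filter, mem_singleton]
    constructor
    · rintro ⟨hx, hxr⟩
      rw [wRank_eq] at hxr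
      exact rk_inj hx hms (by rw [hxr, hmr])
    · rintro rfl
      exact ⟨hms, by rw [wRank_eq, hmr]⟩
  have : sIdx A i j r = m := by rw [sIdx, hset]; simp
  rw [this]; exact ⟨hms, hmr⟩

lemma sIdx_unique {i j r m : ℕ} (hm : m ∈ Finset.Icc i j)
    (hr : rk A (Finset.Icc i j) m = r) : sIdx A i j r = m := by
  have h1 : 1 ≤ r := hr ▸ rk_pos hm
  have h2 : r ≤ (Finset.Icc i j).card := hr ▸ rk_le_card _ _
  obtain ⟨hs, hrs⟩ := sIdx_spec (A := A) h1 h2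
  exact rk_inj hs hm (by rw [hrs, hr])

lemma conf_card {l b i j : ℕ} (hl : l ≤ (Finset.Icc i j).card) :
    (conf A l b i j).card = ((topl A (Finset.Icc i j) l).filter (fun m => b < m)).card := by
  apply Finset.card_bij (fun r _ => sIdx A i j r)
  · intro r hr
    rcases mem_filter.mp hr with ⟨hr1, hr2⟩
    rcases mem_Icc.mp hr1 with ⟨hr3, hr4⟩
    obtain ⟨hs, hrs⟩ := sIdx_spec (A := A) hr3 (le_trans hr4 hl)
    exact mem_filter.mpr ⟨mem_filter.mpr ⟨hs, by omega⟩, hr2⟩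
  · intro r₁ hr₁ r₂ hr₂ h
    rcases mem_Icc.mp (mem_filter.mp hr₁).1 with ⟨h11, h12⟩
    rcases mem_Icc.mp (mem_filter.mp hr₂).1 with ⟨h21, h22⟩
    have e1 := (sIdx_spec (A := A) h11 (le_trans h12 hl)).2
    have e2 := (sIdx_spec (A := A) h21 (le_trans h22 hl)).2
    rw [← e1, ← e2, h]
  · intro m hm
    rcases mem_filter.mp hm with ⟨hmt, hbm⟩
    rcases mem_filter.mp hmt with ⟨hms, hml⟩
    refine ⟨rk A (Finset.Icc i j) m, ?_, sIdx_unique hms rfl⟩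
    have h1 : 1 ≤ rk A (Finset.Icc i j) m := rk_pos hms
    exact mem_filter.mpr ⟨mem_Icc.mpr ⟨h1, hml⟩, by rw [sIdx_unique hms rfl]; exact hbm⟩

lemma cW_indicator {K l : ℕ} (hK : 1 ≤ K) (hl : 1 ≤ l) (hlK : l ≤ K) (b i : ℕ) :
    cW A K l b i = cW A K (l - 1) b i +
      (if b < sIdx A i (i + K - 1) l then 1 else 0) := by
  have hcard : (Finset.Icc i (i + K - 1)).card = K := by rw [Nat.card_Icc]; omega
  obtain ⟨hs, hrs⟩ := sIdx_spec (A := A) (i := i) (j := i + K - 1) hl (by omega)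
  set S := sIdx A i (i + K - 1) l with hS
  have htop : topl A (Finset.Icc i (i + K - 1)) l
      = insert S (topl A (Finset.Icc i (i + K - 1)) (l - 1)) := by
    ext m
    simp only [topl, mem_filter, mem_insert]
    constructor
    · rintro ⟨hm, hml⟩
      rcases eq_or_ne (rk A (Finset.Icc i (i + K - 1)) m) l with he | hne
      · exact Or.inl (rk_inj hm hs (by rw [he, hrs]))
      · exact Or.inr ⟨hm, by omega⟩
    · rintro (rfl | ⟨hm, hml⟩)
      · exact ⟨hs, by omega⟩
      · exact ⟨hm, by omega⟩
  have hSnot : S ∉ topl A (Finset.Icc i (i + K - 1)) (l - 1) := by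
    simp only [topl, mem_filter]
    rintro ⟨-, h⟩
    omega
  unfold cW
  rw [htop, filter_insert]
  split
  · rw [card_insert_of_notMem (fun h => hSnot (mem_filter.mp h).1)]
  · simp

end Defs


/-- If `g_b(i₁) = g_b(i₂)` then throughout `[i₁,i₂]` the rank-`l` index stays on the
same side of `b`. -/
theorem stmt_9 (N K l b : ℕ) (A : ℕ → ℤ) (hK : 1 ≤ K) (hKN : K ≤ N)
    (hl : 1 ≤ l) (hlK : l ≤ K) (i₁ i₂ : ℕ) (h12 : i₁ ≤ i₂) (h2 : i₂ ≤ N - K)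
    (hg : gfun A K l b i₁ = gfun A K l b i₂) :
    ∀ i' : ℕ, i₁ ≤ i' → i' ≤ i₂ →
      (b < sIdx A i' (i' + K - 1) l ↔ b < sIdx A i₁ (i₁ + K - 1) l) := by
  intro i' h1' h2'
  have hcard : ∀ i : ℕ, (Finset.Icc i (i + K - 1)).card = K := by
    intro i; rw [Nat.card_Icc]; omega
  have hgc : ∀ i : ℕ, gfun A K l b i = cW A K l b i + cW A K (l - 1) b i := by
    intro i
    unfold gfun cW
    rw [conf_card (by rw [hcard]; omega), conf_card (by rw [hcard]; omega)]
  have m1 : cW A K l b i₁ ≤ cW A K l b i' := cW_mono hK hlK b h1'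
  have m2 : cW A K l b i' ≤ cW A K l b i₂ := cW_mono hK hlK b h2'
  have m3 : cW A K (l-1) b i₁ ≤ cW A K (l-1) b i' := cW_mono hK (by omega) b h1'
  have m4 : cW A K (l-1) b i' ≤ cW A K (l-1) b i₂ := cW_mono hK (by omega) b h2'
  rw [hgc, hgc] at hg
  have e1 : cW A K l b i' = cW A K l b i₁ := by omega
  have e2 : cW A K (l-1) b i' = cW A K (l-1) b i₁ := by omega
  have ind1 := cW_indicator (A := A) hK hl hlK b i'
  have ind2 := cW_indicator (A := A) hK hl hlK b i₁
  rw [e1, e2] at ind1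
  rw [ind2] at ind1
  by_cases hA : b < sIdx A i' (i' + K - 1) l <;>
    by_cases hB : b < sIdx A i₁ (i₁ + K - 1) l <;>
      simp [hA, hB] at ind1 ⊢
end

section
/- Let A and B be finite nonempty sets, let d ≥ 1, and let T be a nonempty subset of (A × B)^d. For 1 ≤ i ≤ d, s ∈ (A × B)^{i−1} and a ∈ A, let m_{i,s,a} be the number of b ∈ B such that there exists s' ∈ (A × B)^{d−i} with s·(a,b)·s' ∈ T (concatenation of tuples). For 1 ≤ i ≤ d, let n_i be the number of a ∈ A such that there exists some s ∈ (A × B)^{i−1} with m_{i,s,a} ≥ (9/10)·|B|. Then the number of indices i ∈ {1,…,d} with n_i ≤ (9/10)·|A| is at most log( (|A|·|B|)^d / |T| ) / log(100/99). -/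
/-- `mCount T d i s a` is the number of `b ∈ B` such that `s·(a,b)·s' ∈ T` for some
suffix `s'` of length `d - i`. -/
noncomputable def mCount {α β : Type} [Fintype β] (T : Finset (List (α × β)))
    (d i : ℕ) (s : List (α × β)) (a : α) : ℕ :=
  {b : β | ∃ s' : List (α × β), s'.length = d - i ∧ (s ++ (a, b) :: s') ∈ T}.ncard

/-- `nCount T d i` is the number of `a ∈ A` admitting some prefix `s` of length `i-1`
with `mCount T d i s a ≥ (9/10)·|B|`. -/
noncomputable def nCount {α β : Type} [Fintype α] [Fintype β]
    (T : Finset (List (α × β))) (d i : ℕ) : ℕ :=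
  {a : α | ∃ s : List (α × β), s.length = i - 1 ∧
      9 * Fintype.card β ≤ 10 * mCount T d i s a}.ncard

section Aux

variable {α β : Type} [Fintype α] [Fintype β]

open Finset

open Classical in
private lemma mCount_eq (T : Finset (List (α × β))) (d i : ℕ) (s : List (α × β)) (a : α) :
    mCount T d i s a = (Finset.univ.filter
      (fun b : β => ∃ s' : List (α × β), s'.length = d - i ∧ (s ++ (a, b) :: s') ∈ T)).card := by
  have h : {b : β | ∃ s' : List (α × β), s'.length = d - i ∧ (s ++ (a, b) :: s') ∈ T}
      = ↑(Finset.univ.filter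
        (fun b : β => ∃ s' : List (α × β), s'.length = d - i ∧ (s ++ (a, b) :: s') ∈ T)) := by
    ext b; simp
  rw [mCount, h, Set.ncard_coe_finset]

private lemma mCount_le (T : Finset (List (α × β))) (d i : ℕ) (s : List (α × β)) (a : α) :
    mCount T d i s a ≤ Fintype.card β := by
  classical
  rw [mCount_eq]
  simpa using Finset.card_filter_le (Finset.univ : Finset β) _

open Classical in
private lemma nCount_eq (T : Finset (List (α × β))) (d i : ℕ) :
    nCount T d i = (Finset.univ.filter (fun a : α => ∃ s : List (α × β), s.length = i - 1 ∧
      9 * Fintype.card β ≤ 10 * mCount T d i s a)).card := by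
  have h : {a : α | ∃ s : List (α × β), s.length = i - 1 ∧
      9 * Fintype.card β ≤ 10 * mCount T d i s a}
      = ↑(Finset.univ.filter (fun a : α => ∃ s : List (α × β), s.length = i - 1 ∧
        9 * Fintype.card β ≤ 10 * mCount T d i s a)) := by
    ext a; simp
  rw [nCount, h, Set.ncard_coe_finset]

/-- The set of prefixes of length `i` of elements of `T`. -/
private def pref [DecidableEq α] [DecidableEq β] (T : Finset (List (α × β))) (i : ℕ) :
    Finset (List (α × β)) :=
  T.image (fun t => t.take i)

private lemma pref_length [DecidableEq α] [DecidableEq β] {T : Finset (List (α × β))} {d i : ℕ}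
    (hT : ∀ t ∈ T, t.length = d) (hid : i ≤ d) {s : List (α × β)} (hs : s ∈ pref T i) :
    s.length = i := by
  obtain ⟨t, ht, rfl⟩ := Finset.mem_image.mp hs
  simp [hT t ht]
  omega

private lemma pref_zero [DecidableEq α] [DecidableEq β] {T : Finset (List (α × β))}
    (hTne : T.Nonempty) : (pref T 0).card = 1 := by
  obtain ⟨t, ht⟩ := hTne
  have : pref T 0 = {[]} := by
    apply Finset.eq_singleton_iff_unique_mem.mpr
    constructor
    · exact Finset.mem_image.mpr ⟨t, ht, by simp⟩
    · intro s hs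
      obtain ⟨u, _, rfl⟩ := Finset.mem_image.mp hs
      simp
  simp [this]

private lemma pref_top [DecidableEq α] [DecidableEq β] {T : Finset (List (α × β))} {d : ℕ}
    (hT : ∀ t ∈ T, t.length = d) : (pref T d).card = T.card := by
  have : pref T d = T := by
    ext s
    constructor
    · intro hs
      obtain ⟨t, ht, rfl⟩ := Finset.mem_image.mp hs
      rwa [List.take_of_length_le (by simp [hT t ht])]
    · intro hs
      exact Finset.mem_image.mpr ⟨s, hs, List.take_of_length_le (by simp [hT s hs])⟩
  rw [this]

private lemma step_le [DecidableEq α] [DecidableEq β] (T : Finset (List (α × β))) (d j : ℕ)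
    (hT : ∀ t ∈ T, t.length = d) (hjd : j + 1 ≤ d) :
    (pref T (j + 1)).card ≤ ∑ s ∈ pref T j, ∑ a : α, mCount T d (j + 1) s a := by
  classical
  have hsub : pref T (j + 1) ⊆ (pref T j).biUnion (fun s => Finset.univ.biUnion
      (fun a : α => (Finset.univ.filter (fun b : β => ∃ s' : List (α × β),
          s'.length = d - (j + 1) ∧ (s ++ (a, b) :: s') ∈ T)).image
        (fun b => s ++ [(a, b)]))) := by
    intro u hu
    obtain ⟨t, ht, rfl⟩ := Finset.mem_image.mp hu
    have hlen := hT t ht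
    have hj : j < t.length := by omega
    simp only [Finset.mem_biUnion]
    refine ⟨t.take j, Finset.mem_image.mpr ⟨t, ht, rfl⟩, t[j].1, Finset.mem_univ _, ?_⟩
    refine Finset.mem_image.mpr ⟨t[j].2, ?_, ?_⟩
    · refine Finset.mem_filter.mpr ⟨Finset.mem_univ _, t.drop (j + 1), by simp [hlen], ?_⟩
      have heq : t.take j ++ (t[j].1, t[j].2) :: t.drop (j + 1) = t := by
        have h1 := List.take_append_drop j t
        rw [List.drop_eq_getElem_cons hj] at h1
        simpa using h1
      rwa [heq]
    · rw [List.take_succ]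
      simp [List.getElem?_eq_getElem hj]
  calc (pref T (j + 1)).card ≤ _ := Finset.card_le_card hsub
    _ ≤ ∑ s ∈ pref T j, (Finset.univ.biUnion
        (fun a : α => (Finset.univ.filter (fun b : β => ∃ s' : List (α × β),
            s'.length = d - (j + 1) ∧ (s ++ (a, b) :: s') ∈ T)).image
          (fun b => s ++ [(a, b)]))).card := Finset.card_biUnion_le
    _ ≤ ∑ s ∈ pref T j, ∑ a : α, mCount T d (j + 1) s a := by
        apply Finset.sum_le_sum
        intro s _
        refine le_trans Finset.card_biUnion_le (Finset.sum_le_sum fun a _ => ?_)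
        rw [mCount_eq]
        exact Finset.card_image_le

private lemma bad_sum (T : Finset (List (α × β))) (d i : ℕ)
    (s : List (α × β)) (hs : s.length = i - 1)
    (hbad : 10 * nCount T d i ≤ 9 * Fintype.card α) :
    100 * ∑ a : α, mCount T d i s a ≤ 99 * (Fintype.card α * Fintype.card β) := by
  classical
  set H : Finset α := Finset.univ.filter (fun a : α => ∃ s : List (α × β), s.length = i - 1 ∧
      9 * Fintype.card β ≤ 10 * mCount T d i s a) with hHdef
  have hH : H.card = nCount T d i := (nCount_eq T d i).symm
  have h2 : ∀ a ∈ Hᶜ, 10 * mCount T d i s a ≤ 9 * Fintype.card β := by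
    intro a ha
    rw [Finset.mem_compl, hHdef, Finset.mem_filter] at ha
    push_neg at ha
    have := ha (Finset.mem_univ a) s hs
    omega
  have hsplit : ∑ a ∈ H, mCount T d i s a + ∑ a ∈ Hᶜ, mCount T d i s a = ∑ a : α, mCount T d i s a :=
    Finset.sum_add_sum_compl H _
  have hb1 : ∑ a ∈ H, mCount T d i s a ≤ H.card * Fintype.card β :=
    Finset.sum_le_card_nsmul _ _ _ (fun a _ => mCount_le T d i s a)
  have hb2 : ∑ a ∈ Hᶜ, 10 * mCount T d i s a ≤ Hᶜ.card * (9 * Fintype.card β) :=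
    Finset.sum_le_card_nsmul _ _ _ h2
  rw [← Finset.mul_sum] at hb2
  have hcards : H.card + Hᶜ.card = Fintype.card α := Finset.card_add_card_compl H
  have hHb : 10 * H.card ≤ 9 * Fintype.card α := by omega
  nlinarith [hb1, hb2, hsplit, hcards, hHb]

private lemma good_sum (T : Finset (List (α × β))) (d i : ℕ) (s : List (α × β)) :
    ∑ a : α, mCount T d i s a ≤ Fintype.card α * Fintype.card β := by
  calc ∑ a : α, mCount T d i s a ≤ ∑ _a : α, Fintype.card β :=
        Finset.sum_le_sum (fun a _ => mCount_le T d i s a)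
    _ = Fintype.card α * Fintype.card β := by simp [Finset.sum_const, mul_comm]

private lemma main_nat [DecidableEq α] [DecidableEq β] (T : Finset (List (α × β))) (d : ℕ)
    (hT : ∀ t ∈ T, t.length = d) (hTne : T.Nonempty) :
    ∀ i ≤ d, 100 ^ (((Finset.Icc 1 i).filter
        (fun n => 10 * nCount T d n ≤ 9 * Fintype.card α)).card) * (pref T i).card
      ≤ 99 ^ (((Finset.Icc 1 i).filter
        (fun n => 10 * nCount T d n ≤ 9 * Fintype.card α)).card)
          * (Fintype.card α * Fintype.card β) ^ i := by
  classical
  intro i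
  induction i with
  | zero => intro _; simp [pref_zero hTne]
  | succ j ih =>
    intro hjd
    have ihj := ih (by omega)
    set P := fun n => 10 * nCount T d n ≤ 9 * Fintype.card α with hP
    have hicc : Finset.Icc 1 (j + 1) = insert (j + 1) (Finset.Icc 1 j) := by
      ext n
      simp only [Finset.mem_Icc, Finset.mem_insert]
      omega
    have hnotmem : (j + 1) ∉ Finset.Icc 1 j := by simp
    set k := ((Finset.Icc 1 j).filter P).card with hk
    have hstep := step_le T d j hT hjd
    by_cases hbad : P (j + 1)
    · have hcard : ((Finset.Icc 1 (j + 1)).filter P).card = k + 1 := by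
        rw [hicc, Finset.filter_insert, if_pos hbad,
          Finset.card_insert_of_notMem (fun h => hnotmem (Finset.mem_filter.mp h).1)]
      rw [hcard]
      -- 100 * (pref T (j+1)).card ≤ 99 * X * (pref T j).card
      have key : 100 * (pref T (j + 1)).card
          ≤ 99 * (Fintype.card α * Fintype.card β) * (pref T j).card := by
        calc 100 * (pref T (j + 1)).card
            ≤ 100 * ∑ s ∈ pref T j, ∑ a : α, mCount T d (j + 1) s a :=
              Nat.mul_le_mul_left _ hstep
          _ = ∑ s ∈ pref T j, 100 * ∑ a : α, mCount T d (j + 1) s a := Finset.mul_sum _ _ _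
          _ ≤ ∑ _s ∈ pref T j, 99 * (Fintype.card α * Fintype.card β) := by
              apply Finset.sum_le_sum
              intro s hsm
              exact bad_sum T d (j + 1) s (by
                have := pref_length hT (by omega : j ≤ d) hsm; omega) hbad
          _ = 99 * (Fintype.card α * Fintype.card β) * (pref T j).card := by
              rw [Finset.sum_const, smul_eq_mul, mul_comm]
      calc 100 ^ (k + 1) * (pref T (j + 1)).card
          = 100 ^ k * (100 * (pref T (j + 1)).card) := by ring
        _ ≤ 100 ^ k * (99 * (Fintype.card α * Fintype.card β) * (pref T j).card) :=
            Nat.mul_le_mul_left _ key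
        _ = 99 * (Fintype.card α * Fintype.card β) * (100 ^ k * (pref T j).card) := by ring
        _ ≤ 99 * (Fintype.card α * Fintype.card β)
              * (99 ^ k * (Fintype.card α * Fintype.card β) ^ j) :=
            Nat.mul_le_mul_left _ ihj
        _ = 99 ^ (k + 1) * (Fintype.card α * Fintype.card β) ^ (j + 1) := by ring
    · have hcard : ((Finset.Icc 1 (j + 1)).filter P).card = k := by
        rw [hicc, Finset.filter_insert, if_neg hbad]
      rw [hcard]
      have key : (pref T (j + 1)).card
          ≤ Fintype.card α * Fintype.card β * (pref T j).card := by
        calc (pref T (j + 1)).card ≤ ∑ s ∈ pref T j, ∑ a : α, mCount T d (j + 1) s a := hstep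
          _ ≤ ∑ _s ∈ pref T j, Fintype.card α * Fintype.card β :=
              Finset.sum_le_sum (fun s _ => good_sum T d (j + 1) s)
          _ = Fintype.card α * Fintype.card β * (pref T j).card := by
              rw [Finset.sum_const, smul_eq_mul, mul_comm]
      calc 100 ^ k * (pref T (j + 1)).card
          ≤ 100 ^ k * (Fintype.card α * Fintype.card β * (pref T j).card) :=
            Nat.mul_le_mul_left _ key
        _ = Fintype.card α * Fintype.card β * (100 ^ k * (pref T j).card) := by ring
        _ ≤ Fintype.card α * Fintype.card β
              * (99 ^ k * (Fintype.card α * Fintype.card β) ^ j) :=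
            Nat.mul_le_mul_left _ ihj
        _ = 99 ^ k * (Fintype.card α * Fintype.card β) ^ (j + 1) := by ring

end Aux

/-- If `T ⊆ (A × B)^d`, then the number of indices `i ∈ {1,…,d}` with
`n_i ≤ (9/10)·|A|` is at most `log((|A|·|B|)^d / |T|) / log(100/99)`. -/
theorem stmt_10 {α β : Type} [Fintype α] [Fintype β] [Nonempty α] [Nonempty β]
    [DecidableEq α] [DecidableEq β] (d : ℕ) (hd : 1 ≤ d)
    (T : Finset (List (α × β))) (hT : ∀ t ∈ T, t.length = d) (hTne : T.Nonempty) :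
    ({i : ℕ | 1 ≤ i ∧ i ≤ d ∧ 10 * nCount T d i ≤ 9 * Fintype.card α}.ncard : ℝ)
      ≤ Real.log (((Fintype.card α : ℝ) * Fintype.card β) ^ d / T.card) /
          Real.log (100 / 99) := by
  classical
  set P := fun n => 10 * nCount T d n ≤ 9 * Fintype.card α with hP
  set k := ((Finset.Icc 1 d).filter P).card with hk
  have hset : {i : ℕ | 1 ≤ i ∧ i ≤ d ∧ 10 * nCount T d i ≤ 9 * Fintype.card α}
      = ↑((Finset.Icc 1 d).filter P) := by
    ext i
    simp [hP, and_assoc]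
  have hncard : {i : ℕ | 1 ≤ i ∧ i ≤ d ∧ 10 * nCount T d i ≤ 9 * Fintype.card α}.ncard = k := by
    rw [hset, Set.ncard_coe_finset]
  rw [hncard]
  have hmain := main_nat T d hT hTne d le_rfl
  rw [pref_top hT] at hmain
  have hTpos : 0 < T.card := Finset.card_pos.mpr hTne
  -- pass to ℝ
  have hR : ((100 : ℝ) / 99) ^ k ≤ ((Fintype.card α : ℝ) * Fintype.card β) ^ d / T.card := by
    rw [div_pow, div_le_div_iff₀ (by positivity) (by exact_mod_cast hTpos)]
    have : ((100 : ℝ)) ^ k * T.card ≤ 99 ^ k * ((Fintype.card α : ℝ) * Fintype.card β) ^ d := by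
      exact_mod_cast hmain
    linarith
  have hlogpos : 0 < Real.log (100 / 99) := Real.log_pos (by norm_num)
  rw [le_div_iff₀ hlogpos, ← Real.log_pow]
  exact Real.log_le_log (by positivity) hR
end

section
/- Let K, M, R be positive integers with M ≥ 2·log₂ K, R ≥ K, and 2M dividing K, and set N = 2K. Let A be the set of non-decreasing K-tuples (a_1 ≤ a_2 ≤ … ≤ a_K) of integers with 0 < a_k < R, and for 0 ≤ i ≤ K/(2M) let B(i) be the K-tuple consisting of 2Mi copies of R followed by K − 2Mi copies of 0; let B = {B(i) : 0 ≤ i ≤ K/(2M)} and S = A × B. Then there is an absolute constant c > 0 (independent of K, M, R) such that for every deterministic one-round protocol — given by arbitrary functions out_A : A → List(ℕ), msg : A → Fin(2^M), and out_B : Fin(2^M) × B → List(ℕ) — the number of pairs (a,b) ∈ S on which the protocol is correct, i.e. on which the concatenation out_A(a) ++ out_B(msg(a), b) equals the sequence (low(0), low(1), …, low(K)) of sliding-window minima of the length-2K input a·b with window length K, is at most c·M·|S|/K. -/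
/-- Alice's input set: non-decreasing `K`-tuples with values strictly between `0` and `R`. -/
def aliceSet (K R : ℕ) : Set (Fin K → ℕ) :=
  {a | Monotone a ∧ ∀ k, 0 < a k ∧ a k < R}

/-- Bob's `i`-th input: `2Mi` copies of `R` followed by `K - 2Mi` copies of `0`. -/
def bobStr (K M R i : ℕ) : Fin K → ℕ :=
  fun k => if (k : ℕ) < 2 * M * i then R else 0

/-- Bob's input set: `{B(i) : 0 ≤ i ≤ K/(2M)}`. -/
def bobSet (K M R : ℕ) : Set (Fin K → ℕ) :=
  {b | ∃ i ≤ K / (2 * M), b = bobStr K M R i}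

/-- The concatenated input `a·b` of length `2K`, as a function on `ℕ`. -/
def glue (K : ℕ) (a b : Fin K → ℕ) : ℕ → ℕ := fun t =>
  if h : t < K then a ⟨t, h⟩ else if h2 : t - K < K then b ⟨t - K, h2⟩ else 0

/-- `lowN A K i` is the minimum of the window `A_i, …, A_{i+K-1}`. -/
noncomputable def lowN (A : ℕ → ℕ) (K i : ℕ) : ℕ :=
  sInf (A '' Set.Icc i (i + K - 1))

/-! ### Auxiliary lemmas -/

lemma aliceSet_finite (n R : ℕ) : (aliceSet n R).Finite := by
  apply Set.Finite.subset (Set.Finite.pi (fun _ : Fin n => Set.finite_Iio R))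
  intro a ha k _
  exact (ha.2 k).2

lemma strictMono_growth {n : ℕ} {f : Fin n → ℕ} (hf : StrictMono f) :
    ∀ i j : Fin n, (i:ℕ) ≤ (j:ℕ) → f i + ((j:ℕ) - (i:ℕ)) ≤ f j := by
  have key : ∀ d : ℕ, ∀ i j : Fin n, (j:ℕ) = (i:ℕ) + d → f i + d ≤ f j := by
    intro d
    induction d with
    | zero => intro i j h; have : i = j := Fin.ext (by omega); simp [this]
    | succ d ih =>
      intro i j h
      have hj' : (i:ℕ) + d < n := by omega
      have h1 : f i + d ≤ f ⟨(i:ℕ) + d, hj'⟩ := ih i _ rfl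
      have h2 : f ⟨(i:ℕ) + d, hj'⟩ < f j := hf (by simp [Fin.lt_def]; omega)
      omega
  intro i j hij
  have := key ((j:ℕ) - (i:ℕ)) i j (by omega)
  omega

lemma card_aliceSet (n R : ℕ) (hR : 2 ≤ R) :
    (aliceSet_finite n R).toFinset.card = (n + R - 2).choose n := by
  have harith : n + R - 2 + 1 - 1 = n + R - 2 := by omega
  have hcard : ((Finset.Icc 1 (n + R - 2)).powersetCard n).card = (n + R - 2).choose n := by
    rw [Finset.card_powersetCard, Nat.card_Icc, harith]
  rw [← hcard]
  apply le_antisymm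
  · -- injection a ↦ image (a k + k)
    apply Finset.card_le_card_of_injOn (fun a => Finset.image (fun k : Fin n => a k + (k:ℕ)) Finset.univ)
    · intro a ha
      rw [Finset.mem_coe, Set.Finite.mem_toFinset] at ha
      obtain ⟨hmono, hb⟩ := ha
      have hg : StrictMono (fun k : Fin n => a k + (k:ℕ)) := by
        intro k k' hk
        have h1 := hmono hk.le
        have h2 : (k:ℕ) < k' := hk
        simp only []
        omega
      rw [Finset.mem_coe, Finset.mem_powersetCard]
      constructor
      · intro x hx
        simp only [Finset.mem_image, Finset.mem_univ, true_and] at hx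
        obtain ⟨k, rfl⟩ := hx
        have h1 := (hb k).1
        have h2 := (hb k).2
        have h3 : (k:ℕ) < n := k.isLt
        rw [Finset.mem_Icc]
        omega
      · rw [Finset.card_image_of_injective _ hg.injective, Finset.card_univ, Fintype.card_fin]
    · intro a ha a' ha' heq
      rw [Finset.mem_coe, Set.Finite.mem_toFinset] at ha
      rw [Finset.mem_coe, Set.Finite.mem_toFinset] at ha'
      dsimp only at heq
      have hg : StrictMono (fun k : Fin n => a k + (k:ℕ)) := by
        intro k k' hk
        have h1 := ha.1 hk.le
        have h2 : (k:ℕ) < k' := hk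
        simp only []; omega
      have hg' : StrictMono (fun k : Fin n => a' k + (k:ℕ)) := by
        intro k k' hk
        have h1 := ha'.1 hk.le
        have h2 : (k:ℕ) < k' := hk
        simp only []; omega
      set S := Finset.image (fun k : Fin n => a k + (k:ℕ)) Finset.univ with hS
      have hScard : S.card = n := by
        rw [hS, Finset.card_image_of_injective _ hg.injective, Finset.card_univ, Fintype.card_fin]
      have e1 : (fun k : Fin n => a k + (k:ℕ)) = ⇑(S.orderEmbOfFin hScard) :=
        Finset.orderEmbOfFin_unique hScard (fun x => by simp [hS]) hg
      have e2 : (fun k : Fin n => a' k + (k:ℕ)) = ⇑(S.orderEmbOfFin hScard) :=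
        Finset.orderEmbOfFin_unique hScard (fun x => by rw [heq]; simp) hg'
      funext k
      have := congrFun (e1.trans e2.symm) k
      simpa using this
  · -- injection S ↦ (k ↦ orderEmbOfFin S k - k)
    classical
    apply Finset.card_le_card_of_injOn
      (fun S => if h : S.card = n then (fun k : Fin n => S.orderEmbOfFin h k - (k:ℕ)) else 0)
    · intro S hS
      rw [Finset.mem_coe, Finset.mem_powersetCard] at hS
      obtain ⟨hsub, hcd⟩ := hS
      try dsimp only
      rw [dif_pos hcd, Finset.mem_coe, Set.Finite.mem_toFinset]
      set e := S.orderEmbOfFin hcd with he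
      have hmem : ∀ k, e k ∈ Finset.Icc 1 (n + R - 2) := fun k => hsub (S.orderEmbOfFin_mem hcd k)
      have hsm : StrictMono e := (S.orderEmbOfFin hcd).strictMono
      have hlow : ∀ k : Fin n, (k:ℕ) + 1 ≤ e k := by
        intro k
        have h0 : (0:ℕ) < n := k.pos
        have := strictMono_growth hsm ⟨0, h0⟩ k (by simp)
        have := (Finset.mem_Icc.mp (hmem ⟨0, h0⟩)).1
        simp at *; omega
      have hhigh : ∀ k : Fin n, e k ≤ R - 1 + (k:ℕ) := by
        intro k
        have hn : 0 < n := k.pos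
        have hlast : (k:ℕ) ≤ (⟨n-1, by omega⟩ : Fin n) := by simp; omega
        have := strictMono_growth hsm k ⟨n-1, by omega⟩ (by simp; omega)
        have := (Finset.mem_Icc.mp (hmem ⟨n-1, by omega⟩)).2
        simp at *; omega
      refine ⟨?_, ?_⟩
      · intro k k' hkk'
        have h1 := strictMono_growth hsm k k' hkk'
        have h2 := hlow k
        show e k - (k:ℕ) ≤ e k' - (k':ℕ)
        omega
      · intro k
        have h1 := hlow k
        have h2 := hhigh k
        constructor
        · show 0 < e k - (k:ℕ); omega
        · show e k - (k:ℕ) < R; omega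
    · intro S hS S' hS' heq
      rw [Finset.mem_coe, Finset.mem_powersetCard] at hS hS'
      have hc : S.card = n := hS.2
      have hc' : S'.card = n := hS'.2
      try dsimp only at heq
      rw [dif_pos hc, dif_pos hc'] at heq
      have hlow : ∀ k : Fin n, (k:ℕ) ≤ S.orderEmbOfFin hc k := by
        intro k
        have hn : 0 < n := k.pos
        have := strictMono_growth (S.orderEmbOfFin hc).strictMono ⟨0, hn⟩ k (by simp)
        simp at this; omega
      have hlow' : ∀ k : Fin n, (k:ℕ) ≤ S'.orderEmbOfFin hc' k := by
        intro k
        have hn : 0 < n := k.pos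
        have := strictMono_growth (S'.orderEmbOfFin hc').strictMono ⟨0, hn⟩ k (by simp)
        simp at this; omega
      have hfun : ⇑(S.orderEmbOfFin hc) = ⇑(S'.orderEmbOfFin hc') := by
        funext k
        have := congrFun heq k
        have := hlow k; have := hlow' k
        omega
      have : (S : Set ℕ) = (S' : Set ℕ) := by
        rw [← Finset.range_orderEmbOfFin S hc, ← Finset.range_orderEmbOfFin S' hc', hfun]
      exact_mod_cast this

lemma glue_lt {K : ℕ} {a b : Fin K → ℕ} {t : ℕ} (h : t < K) :
    glue K a b t = a ⟨t, h⟩ := dif_pos h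

lemma glue_ge {K : ℕ} {a b : Fin K → ℕ} {t : ℕ} (h1 : ¬ t < K) (h2 : t - K < K) :
    glue K a b t = b ⟨t - K, h2⟩ := by rw [glue, dif_neg h1, dif_pos h2]

lemma lowN_glue {K M R j : ℕ} {a : Fin K → ℕ} (hK : 0 < K)
    (ha : a ∈ aliceSet K R) (hj : 2 * M * j ≤ K) {i : ℕ} (hi : i ≤ K) :
    lowN (glue K a (bobStr K M R j)) K i =
      if i ≤ 2 * M * j then (if h : i < K then a ⟨i, h⟩ else R) else 0 := by
  obtain ⟨hmono, hb⟩ := ha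
  by_cases hcase : i ≤ 2 * M * j
  · rw [if_pos hcase]
    by_cases hiK : i < K
    · rw [dif_pos hiK]
      have hmem : a ⟨i, hiK⟩ ∈ glue K a (bobStr K M R j) '' Set.Icc i (i + K - 1) :=
        ⟨i, ⟨le_refl i, by omega⟩, glue_lt hiK⟩
      apply le_antisymm (Nat.sInf_le hmem)
      apply le_csInf ⟨_, hmem⟩
      rintro x ⟨t, ⟨ht1, ht2⟩, rfl⟩
      by_cases htK : t < K
      · rw [glue_lt htK]
        exact hmono (by simp [Fin.le_def]; omega)
      · have h1 : t - K < K := by omega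
        have h2 : t - K < 2 * M * j := by omega
        rw [glue_ge htK h1]
        have hv : bobStr K M R j ⟨t - K, h1⟩ = R := if_pos h2
        rw [hv]
        exact le_of_lt (hb ⟨i, hiK⟩).2
    · rw [dif_neg hiK]
      have hiK' : i = K := by omega
      have hjK : 2 * M * j = K := by omega
      have h2 : ∀ t (_ : ¬ t < K) (h2 : t - K < K), bobStr K M R j ⟨t - K, h2⟩ = R := by
        intro t h1 h2
        exact if_pos (by omega : t - K < 2 * M * j)
      have hmem : R ∈ glue K a (bobStr K M R j) '' Set.Icc i (i + K - 1) := by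
        refine ⟨K, ⟨by omega, by omega⟩, ?_⟩
        rw [glue_ge (by omega) (by omega : K - K < K)]
        exact h2 K (by omega) (by omega)
      apply le_antisymm (Nat.sInf_le hmem)
      apply le_csInf ⟨_, hmem⟩
      rintro x ⟨t, ⟨ht1, ht2⟩, rfl⟩
      have ha1 : ¬ t < K := by omega
      have ha2 : t - K < K := by omega
      rw [glue_ge ha1 ha2, h2 t ha1 ha2]
  · rw [if_neg hcase]
    rw [lowN, Nat.sInf_eq_zero]
    left
    have h1 : ¬ K + 2 * M * j < K := by omega
    have h2 : K + 2 * M * j - K < K := by omega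
    refine ⟨K + 2 * M * j, ⟨by omega, by omega⟩, ?_⟩
    rw [glue_ge h1 h2]
    exact if_neg (by omega : ¬ K + 2 * M * j - K < 2 * M * j)

section Protocol
variable {K M R : ℕ} (outA : (Fin K → ℕ) → List ℕ) (msg : (Fin K → ℕ) → Fin (2 ^ M))
  (outB : Fin (2 ^ M) × (Fin K → ℕ) → List ℕ)

def correctOn (a : Fin K → ℕ) (j : ℕ) : Prop :=
  outA a ++ outB (msg a, bobStr K M R j) =
    List.ofFn (fun i : Fin (K + 1) => lowN (glue K a (bobStr K M R j)) K i)

variable {outA msg outB}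

lemma hlen_of {a j} (hc : correctOn (R := R) outA msg outB a j) :
    (outA a).length + (outB (msg a, bobStr K M R j)).length = K + 1 := by
  have := congrArg List.length hc
  simpa [List.length_append, List.length_ofFn] using this

lemma entry_of {a j} (hc : correctOn (R := R) outA msg outB a j) (hK : 0 < K)
    (ha : a ∈ aliceSet K R) (hj : 2 * M * j ≤ K) {i : ℕ} (hi : i ≤ K) :
    (outA a ++ outB (msg a, bobStr K M R j))[i]'(by
        rw [List.length_append, hlen_of hc]; omega) =
      if i ≤ 2 * M * j then (if h : i < K then a ⟨i, h⟩ else R) else 0 := by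
  have h1 : i < (outA a ++ outB (msg a, bobStr K M R j)).length := by
    rw [List.length_append, hlen_of hc]; omega
  rw [List.getElem_of_eq hc h1, List.getElem_ofFn]
  exact lowN_glue hK ha hj hi

lemma entry_left {a j} (hc : correctOn (R := R) outA msg outB a j) (hK : 0 < K)
    (ha : a ∈ aliceSet K R) (hj : 2 * M * j ≤ K) {i : ℕ}
    (hiℓ : i < (outA a).length) (hi : i ≤ K) :
    (outA a)[i]'hiℓ = if i ≤ 2 * M * j then (if h : i < K then a ⟨i, h⟩ else R) else 0 := by
  rw [← entry_of hc hK ha hj hi]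
  exact (List.getElem_append_left hiℓ).symm

lemma entry_right {a j} (hc : correctOn (R := R) outA msg outB a j) (hK : 0 < K)
    (ha : a ∈ aliceSet K R) (hj : 2 * M * j ≤ K) {p : ℕ}
    (hℓ : (outA a).length ≤ p) (hp : p ≤ K) :
    (outB (msg a, bobStr K M R j))[p - (outA a).length]'(by
        have := hlen_of hc; omega) =
      if p ≤ 2 * M * j then (if h : p < K then a ⟨p, h⟩ else R) else 0 := by
  rw [← entry_of hc hK ha hj hp]
  exact (List.getElem_append_right hℓ).symm

lemma len_le_of_two {a j1 j2} (hc1 : correctOn (R := R) outA msg outB a j1)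
    (hc2 : correctOn (R := R) outA msg outB a j2) (hK : 0 < K) (hM : 0 < M)
    (ha : a ∈ aliceSet K R) (hj12 : j1 < j2) (hj2 : 2 * M * j2 ≤ K) :
    (outA a).length ≤ 2 * M * j1 + 1 := by
  by_contra hcon
  push_neg at hcon
  set i := 2 * M * j1 + 1 with hidef
  have hiℓ : i < (outA a).length := hcon
  have hij2 : 2 * M * j1 + 2 * M ≤ 2 * M * j2 := by
    have h : j1 + 1 ≤ j2 := hj12
    calc 2 * M * j1 + 2 * M = 2 * M * (j1 + 1) := by ring
    _ ≤ 2 * M * j2 := Nat.mul_le_mul_left _ h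
  have hiK : i < K := by omega
  have hi : i ≤ K := le_of_lt hiK
  have hj1 : 2 * M * j1 ≤ K := by omega
  have e1 := entry_left hc1 hK ha hj1 hiℓ hi
  have e2 := entry_left hc2 hK ha hj2 hiℓ hi
  rw [if_neg (by omega)] at e1
  rw [if_pos (by omega), dif_pos hiK] at e2
  have := (ha.2 ⟨i, hiK⟩).1
  omega

lemma recon {a j p} (hc : correctOn (R := R) outA msg outB a j) (hK : 0 < K)
    (ha : a ∈ aliceSet K R) (hj : 2 * M * j ≤ K)
    (hℓ : (outA a).length ≤ p) (hp1 : p ≤ 2 * M * j) (hp2 : p < K) :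
    (outB (msg a, bobStr K M R j))[p - (outA a).length]'(by
        have := hlen_of hc; omega) = a ⟨p, hp2⟩ := by
  rw [entry_right hc hK ha hj hℓ (le_of_lt hp2), if_pos hp1, dif_pos hp2]

end Protocol

/-- order embedding `Fin (K - s) → Fin K` skipping positions `[lo, lo+s)`. -/
def embF (K s lo : ℕ) (t : Fin (K - s)) : Fin K :=
  if (t:ℕ) < lo then ⟨(t:ℕ), by have := t.2; omega⟩
  else ⟨(t:ℕ) + s, by have := t.2; omega⟩

lemma embF_val (K s lo : ℕ) (t : Fin (K - s)) :
    ((embF K s lo t : Fin K) : ℕ) = if (t:ℕ) < lo then (t:ℕ) else (t:ℕ) + s := by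
  rw [embF]; split <;> rfl

/-! ### Numeric lemmas -/

lemma choose_step {K R m : ℕ} (hK : 2 ≤ K) (hKR : K ≤ R) (hm : m + 1 ≤ K) :
    (2*K - 2) * (m + R - 2).choose m ≤ K * (m + 1 + R - 2).choose (m+1) := by
  have hkey := Nat.add_one_mul_choose_eq (m + R - 2) m
  have h1 : m + R - 2 + 1 = m + R - 1 := by omega
  have h2 : m + 1 + R - 2 = m + R - 1 := by omega
  rw [h1] at hkey
  rw [h2]
  have hineq : (2*K - 2) * (m+1) ≤ K * (m + K - 1) := by
    zify [show (2:ℕ) ≤ 2*K by omega, show (1:ℕ) ≤ m + K by omega]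
    nlinarith [sq_nonneg ((K:ℤ) - m - 1), (show (2:ℤ) ≤ K by exact_mod_cast hK),
      (show (m:ℤ) + 1 ≤ K by exact_mod_cast hm)]
  apply Nat.le_of_mul_le_mul_right _ (show 0 < m + 1 by omega)
  calc (2*K-2) * (m + R - 2).choose m * (m+1)
      = ((2*K-2)*(m+1)) * (m + R - 2).choose m := by ring
    _ ≤ (K * (m + K - 1)) * (m + R - 2).choose m := Nat.mul_le_mul_right _ hineq
    _ ≤ (K * (m + R - 1)) * (m + R - 2).choose m := by
        apply Nat.mul_le_mul_right
        apply Nat.mul_le_mul_left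
        omega
    _ = K * ((m + R - 1) * (m + R - 2).choose m) := by ring
    _ = K * ((m + R - 1).choose (m+1) * (m+1)) := by rw [hkey]
    _ = K * (m + R - 1).choose (m+1) * (m+1) := by ring

lemma choose_tele {K R : ℕ} (hK : 2 ≤ K) (hKR : K ≤ R) :
    ∀ d n₀, n₀ + d ≤ K →
      (2*K-2)^d * (n₀ + R - 2).choose n₀ ≤ K^d * (n₀ + d + R - 2).choose (n₀ + d) := by
  intro d
  induction d with
  | zero => intro n₀ h; simp
  | succ d ih =>
    intro n₀ h
    have h1 : n₀ + d + 1 ≤ K := by omega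
    calc (2*K-2)^(d+1) * (n₀ + R - 2).choose n₀
        = (2*K-2) * ((2*K-2)^d * (n₀ + R - 2).choose n₀) := by ring
      _ ≤ (2*K-2) * (K^d * (n₀ + d + R - 2).choose (n₀ + d)) :=
          Nat.mul_le_mul_left _ (ih n₀ (by omega))
      _ = K^d * ((2*K-2) * (n₀ + d + R - 2).choose (n₀ + d)) := by ring
      _ ≤ K^d * (K * (n₀ + d + 1 + R - 2).choose (n₀ + d + 1)) :=
          Nat.mul_le_mul_left _ (choose_step hK hKR h1)
      _ = K^(d+1) * (n₀ + (d+1) + R - 2).choose (n₀ + (d+1)) := by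
          rw [show n₀ + (d+1) = n₀ + d + 1 by omega]; ring

lemma pow_ratio {K : ℕ} (hK : 2 ≤ K) {s : ℕ} (hs : s ≤ K - 1) :
    ((K:ℝ))^s ≤ 3 * ((K:ℝ) - 1)^s := by
  have hK2 : (2:ℝ) ≤ (K:ℝ) := by exact_mod_cast hK
  have hK1 : (1:ℝ) ≤ (K:ℝ) - 1 := by linarith
  have hK1pos : (0:ℝ) < (K:ℝ) - 1 := by linarith
  have hb : (K:ℝ)/((K:ℝ)-1) = 1 + 1/((K:ℝ)-1) := by field_simp; ring
  have hbge1 : (1:ℝ) ≤ (K:ℝ)/((K:ℝ)-1) := by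
    rw [hb]
    have : (0:ℝ) < 1/((K:ℝ)-1) := by positivity
    linarith
  have h1 : (1 + 1/((K:ℝ)-1)) ≤ Real.exp (1/((K:ℝ)-1)) := by
    have := Real.add_one_le_exp (1/((K:ℝ)-1)); linarith
  have h2 : ((K:ℝ)/((K:ℝ)-1))^(K-1) ≤ Real.exp 1 := by
    calc ((K:ℝ)/((K:ℝ)-1))^(K-1) ≤ (Real.exp (1/((K:ℝ)-1)))^(K-1) := by
          rw [hb]; exact pow_le_pow_left₀ (by positivity) h1 _
      _ = Real.exp (((K-1 : ℕ):ℝ) * (1/((K:ℝ)-1))) := (Real.exp_nat_mul _ _).symm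
      _ = Real.exp 1 := by
          congr 1
          have : ((K-1:ℕ):ℝ) = (K:ℝ) - 1 := by
            have : (1:ℕ) ≤ K := by omega
            push_cast [this]; ring
          rw [this]; field_simp
  have h3 : ((K:ℝ)/((K:ℝ)-1))^s ≤ ((K:ℝ)/((K:ℝ)-1))^(K-1) := pow_le_pow_right₀ hbge1 hs
  have hexp3 : Real.exp 1 ≤ 3 := by
    have := Real.exp_one_lt_d9; linarith
  calc (K:ℝ)^s = (((K:ℝ)-1) * ((K:ℝ)/((K:ℝ)-1)))^s := by
        congr 1; field_simp
    _ = ((K:ℝ)-1)^s * ((K:ℝ)/((K:ℝ)-1))^s := mul_pow _ _ _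
    _ ≤ ((K:ℝ)-1)^s * 3 := by
        apply mul_le_mul_of_nonneg_left _ (by positivity)
        exact h3.trans (h2.trans hexp3)
    _ = 3 * ((K:ℝ)-1)^s := mul_comm _ _

/-- There is an absolute constant `c > 0` so that no deterministic one-round protocol
with `M` bits of communication solves sliding-window minimum (window `K`, input `a·b`
of length `2K`) on more than `c·M·|S|/K` of the inputs in `S = A × B`. -/
theorem stmt_11 :
    ∃ c : ℝ, 0 < c ∧
      ∀ K M R : ℕ, 0 < K → 0 < M → 0 < R →
        2 * Real.logb 2 K ≤ (M : ℝ) → K ≤ R → 2 * M ∣ K →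
        ∀ (outA : (Fin K → ℕ) → List ℕ) (msg : (Fin K → ℕ) → Fin (2 ^ M))
          (outB : Fin (2 ^ M) × (Fin K → ℕ) → List ℕ),
          ({ab : (Fin K → ℕ) × (Fin K → ℕ) |
              ab ∈ aliceSet K R ×ˢ bobSet K M R ∧
              outA ab.1 ++ outB (msg ab.1, ab.2) =
                List.ofFn (fun i : Fin (K + 1) =>
                  lowN (glue K ab.1 ab.2) K i)}.ncard : ℝ)
            ≤ c * M * (aliceSet K R ×ˢ bobSet K M R).ncard / K := by
  classical
  refine ⟨64, by norm_num, ?_⟩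
  intro K M R hK hM hR hlog hKR hdvd outA msg outB
  have hJK : 2 * M * (K / (2 * M)) = K := Nat.mul_div_cancel' hdvd
  set J := K / (2 * M) with hJdef
  have h2M : 2 * M ≤ K := Nat.le_of_dvd hK hdvd
  have hK2 : 2 ≤ K := by omega
  have hR2 : 2 ≤ R := le_trans hK2 hKR
  have hJ1 : 1 ≤ J := by
    rcases Nat.eq_zero_or_pos J with h | h
    · rw [h, mul_zero] at hJK; omega
    · exact h
  set FA := (aliceSet_finite K R).toFinset with hFAdef
  set FA' := (aliceSet_finite (K - (2*M-1)) R).toFinset with hFA'def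
  set FB := (Finset.Iic J).image (bobStr K M R) with hFBdef
  set FS := (FA ×ˢ FB).filter (fun ab => outA ab.1 ++ outB (msg ab.1, ab.2) =
      List.ofFn (fun i : Fin (K + 1) => lowN (glue K ab.1 ab.2) K ↑i)) with hFSdef
  -- identify the sets with finsets
  have hAcoe : aliceSet K R = ↑FA := (Set.Finite.coe_toFinset _).symm
  have hBcoe : bobSet K M R = ↑FB := by
    ext b
    simp only [bobSet, Set.mem_setOf_eq, hFBdef, Finset.coe_image, Set.mem_image,
      Finset.coe_Iic, Set.mem_Iic]
    constructor
    · rintro ⟨i, h1, h2⟩; exact ⟨i, h1, h2.symm⟩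
    · rintro ⟨i, h1, h2⟩; exact ⟨i, h1, h2.symm⟩
  have hprodcoe : aliceSet K R ×ˢ bobSet K M R = ↑(FA ×ˢ FB) := by
    rw [Finset.coe_product, hAcoe, hBcoe]
  have hSeq : {ab : (Fin K → ℕ) × (Fin K → ℕ) |
      ab ∈ aliceSet K R ×ˢ bobSet K M R ∧
      outA ab.1 ++ outB (msg ab.1, ab.2) =
        List.ofFn (fun i : Fin (K + 1) => lowN (glue K ab.1 ab.2) K ↑i)} = ↑FS := by
    ext ab
    simp only [Set.mem_setOf_eq, hprodcoe, Finset.mem_coe, hFSdef, Finset.mem_filter]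
  rw [hSeq, hprodcoe, Set.ncard_coe_finset, Set.ncard_coe_finset]
  -- card of FB
  have hFBcard : FB.card = J + 1 := by
    rw [hFBdef, Finset.card_image_of_injOn, Nat.card_Iic]
    have key : ∀ i ≤ J, ∀ i' ≤ J, i < i' → bobStr K M R i ≠ bobStr K M R i' := by
      intro i hi i' hi' hlt heq
      have hmul : 2 * M * i + 2 * M ≤ 2 * M * i' := by
        have h : i + 1 ≤ i' := hlt
        calc 2 * M * i + 2 * M = 2 * M * (i + 1) := by ring
        _ ≤ 2 * M * i' := Nat.mul_le_mul_left _ h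
      have hmul2 : 2 * M * i' ≤ K := by
        calc 2 * M * i' ≤ 2 * M * J := Nat.mul_le_mul_left _ hi'
        _ = K := hJK
      have hidx : 2 * M * i < K := by omega
      have hv1 : bobStr K M R i ⟨2 * M * i, hidx⟩ = 0 := if_neg (by show ¬ 2*M*i < 2*M*i; omega)
      have hv2 : bobStr K M R i' ⟨2 * M * i, hidx⟩ = R := if_pos (by show 2*M*i < 2*M*i'; omega)
      rw [heq, hv2] at hv1
      omega
    intro i hi i' hi' heq
    rw [Finset.mem_coe, Finset.mem_Iic] at hi hi'
    by_contra hne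
    rcases Nat.lt_or_ge i i' with h | h
    · exact key i hi i' hi' h heq
    · exact key i' hi' i hi (by omega) heq.symm
  -- correctness slices
  set Fcor := fun j => FA.filter (fun a => correctOn (R := R) outA msg outB a j) with hFcordef
  have hFS_le : FS.card ≤ ∑ j ∈ Finset.Iic J, (Fcor j).card := by
    have hsub : FS ⊆ (Finset.Iic J).biUnion
        (fun j => (Fcor j).image (fun a => (a, bobStr K M R j))) := by
      intro ab hab
      rw [hFSdef, Finset.mem_filter] at hab
      obtain ⟨hmem, hpred⟩ := hab
      obtain ⟨ha, hb⟩ := Finset.mem_product.mp hmem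
      obtain ⟨j, hjmem, hbeq⟩ := Finset.mem_image.mp hb
      apply Finset.mem_biUnion.mpr
      refine ⟨j, hjmem, Finset.mem_image.mpr ⟨ab.1, ?_, ?_⟩⟩
      · rw [hFcordef]
        refine Finset.mem_filter.mpr ⟨ha, ?_⟩
        show outA ab.1 ++ outB (msg ab.1, bobStr K M R j) =
          List.ofFn (fun i : Fin (K + 1) => lowN (glue K ab.1 (bobStr K M R j)) K ↑i)
        rw [hbeq]
        exact hpred
      · exact Prod.ext rfl hbeq
    calc FS.card ≤ _ := Finset.card_le_card hsub
      _ ≤ ∑ j ∈ Finset.Iic J, ((Fcor j).image (fun a => (a, bobStr K M R j))).card :=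
          Finset.card_biUnion_le
      _ ≤ ∑ j ∈ Finset.Iic J, (Fcor j).card :=
          Finset.sum_le_sum (fun j _ => Finset.card_image_le)
  set Hs := fun j => (Fcor j).filter
    (fun a => ∀ j' < j, ¬ correctOn (R := R) outA msg outB a j') with hHsdef
  set Gs := fun j => (Fcor j).filter
    (fun a => ∃ j' < j, correctOn (R := R) outA msg outB a j') with hGsdef
  have hsplit : ∀ j, (Fcor j).card ≤ (Hs j).card + (Gs j).card := by
    intro j
    have hsub : Fcor j ⊆ Hs j ∪ Gs j := by
      intro a ha
      by_cases hem : ∃ j' < j, correctOn (R := R) outA msg outB a j'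
      · exact Finset.mem_union_right _ (Finset.mem_filter.mpr ⟨ha, hem⟩)
      · push_neg at hem
        exact Finset.mem_union_left _ (Finset.mem_filter.mpr ⟨ha, hem⟩)
    exact le_trans (Finset.card_le_card hsub) (Finset.card_union_le _ _)
  have hHsum : ∑ j ∈ Finset.Iic J, (Hs j).card ≤ FA.card := by
    have hdisj : ∀ j ∈ Finset.Iic J, ∀ j' ∈ Finset.Iic J, j ≠ j' →
        Disjoint (Hs j) (Hs j') := by
      have key : ∀ j j', j < j' → Disjoint (Hs j) (Hs j') := by
        intro j j' hlt
        rw [Finset.disjoint_left]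
        intro a haj haj'
        have h1 : correctOn (R := R) outA msg outB a j :=
          (Finset.mem_filter.mp (Finset.mem_filter.mp haj).1).2
        have h2 := (Finset.mem_filter.mp haj').2
        exact h2 j hlt h1
      intro j _ j' _ hne
      rcases Nat.lt_or_ge j j' with h | h
      · exact key j j' h
      · exact (key j' j (by omega)).symm
    calc ∑ j ∈ Finset.Iic J, (Hs j).card
        = ((Finset.Iic J).biUnion Hs).card := (Finset.card_biUnion hdisj).symm
      _ ≤ FA.card := by
          apply Finset.card_le_card
          intro a ha
          obtain ⟨j, _, haj⟩ := Finset.mem_biUnion.mp ha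
          exact (Finset.mem_filter.mp (Finset.mem_filter.mp haj).1).1
  -- the injection bound for Gs
  have hG : ∀ j ∈ Finset.Iic J, (Gs j).card ≤ 2^M * ((K+2) * FA'.card) := by
    intro j hjmem
    have hjle : j ≤ J := Finset.mem_Iic.mp hjmem
    have h2Mj : 2*M*j ≤ K := by
      calc 2*M*j ≤ 2*M*J := Nat.mul_le_mul_left _ hjle
      _ = K := hJK
    have hcardT : ((Finset.univ : Finset (Fin (2^M))) ×ˢ
        (Finset.range (K+2) ×ˢ FA')).card = 2^M * ((K+2) * FA'.card) := by
      rw [Finset.card_product, Finset.card_product, Finset.card_univ, Fintype.card_fin,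
        Finset.card_range]
    rw [← hcardT]
    set L := min (2*M*j) (K-1) - (2*M - 2) with hLdef
    apply Finset.card_le_card_of_injOn
      (fun a => (msg a, ((outA a).length, fun t : Fin (K - (2*M-1)) => a (embF K (2*M-1) L t))))
    · -- maps to
      intro a ha
      rw [Finset.mem_coe, hGsdef, Finset.mem_filter, hFcordef, Finset.mem_filter] at ha
      obtain ⟨⟨haFA, hcor⟩, hex⟩ := ha
      rw [hFAdef, Set.Finite.mem_toFinset] at haFA
      rw [Finset.mem_coe]
      refine Finset.mem_product.mpr ⟨Finset.mem_univ _, Finset.mem_product.mpr ⟨?_, ?_⟩⟩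
      · show (outA a).length ∈ Finset.range (K+2)
        rw [Finset.mem_range]
        have := hlen_of hcor
        omega
      · show (fun t : Fin (K - (2*M-1)) => a (embF K (2*M-1) L t)) ∈ FA'
        rw [hFA'def, Set.Finite.mem_toFinset]
        constructor
        · intro t t' htt'
          apply haFA.1
          rw [Fin.le_def, embF_val, embF_val]
          have h1 : (t:ℕ) ≤ (t':ℕ) := htt'
          split <;> split <;> omega
        · intro t
          exact haFA.2 _
    · -- injective
      intro a ha a' ha' heq
      rw [Finset.mem_coe, hGsdef, Finset.mem_filter, hFcordef, Finset.mem_filter] at ha ha'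
      obtain ⟨⟨haFA, hcor⟩, j1, hj1, hc1⟩ := ha
      obtain ⟨⟨haFA', hcor'⟩, j1', hj1', hc1'⟩ := ha'
      rw [hFAdef, Set.Finite.mem_toFinset] at haFA haFA'
      simp only [Prod.mk.injEq] at heq
      obtain ⟨hmsg, hlen, hfun⟩ := heq
      have hmul1 : 2*M*j1 + 2*M ≤ 2*M*j := by
        have h : j1 + 1 ≤ j := hj1
        calc 2*M*j1 + 2*M = 2*M*(j1+1) := by ring
        _ ≤ 2*M*j := Nat.mul_le_mul_left _ h
      have hmul1' : 2*M*j1' + 2*M ≤ 2*M*j := by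
        have h : j1' + 1 ≤ j := hj1'
        calc 2*M*j1' + 2*M = 2*M*(j1'+1) := by ring
        _ ≤ 2*M*j := Nat.mul_le_mul_left _ h
      have hL1 : (outA a).length ≤ L := by
        have := len_le_of_two hc1 hcor hK hM haFA hj1 h2Mj
        omega
      have hL1' : (outA a').length ≤ L := by
        have := len_le_of_two hc1' hcor' hK hM haFA' hj1' h2Mj
        omega
      have hLn : L + (2*M-1) - 1 = min (2*M*j) (K-1) := by omega
      funext p
      rcases p with ⟨p, hpK⟩
      by_cases hp1 : p < L
      · have hpn : p < K - (2*M-1) := by omega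
        have hval := congrFun hfun ⟨p, hpn⟩
        have hemb : embF K (2*M-1) L ⟨p, hpn⟩ = ⟨p, hpK⟩ := by
          apply Fin.ext
          rw [embF_val]
          exact if_pos hp1
        rw [hemb] at hval
        exact hval
      · by_cases hp2 : p < L + (2*M-1)
        · -- middle segment: reconstruct from Bob's message
          have hle : (outA a).length ≤ p := le_trans hL1 (not_lt.mp hp1)
          have hle' : (outA a').length ≤ p := le_trans hL1' (not_lt.mp hp1)
          have hpm : p ≤ 2*M*j := by omega
          have e1 := recon hcor hK haFA h2Mj hle hpm hpK
          have e2 := recon hcor' hK haFA' h2Mj hle' hpm hpK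
          rw [← e1, ← e2]
          simp only [hmsg, hlen]
        · have hpn : p - (2*M-1) < K - (2*M-1) := by omega
          have hval := congrFun hfun ⟨p - (2*M-1), hpn⟩
          have hcond : ¬ ((⟨p - (2*M-1), hpn⟩ : Fin (K - (2*M-1))) : ℕ) < L := by
            show ¬ p - (2*M-1) < L
            omega
          have hvv : ((embF K (2*M-1) L ⟨p - (2*M-1), hpn⟩ : Fin K) : ℕ)
              = p - (2*M-1) + (2*M-1) := by
            rw [embF_val]
            exact if_neg hcond
          have hemb : embF K (2*M-1) L ⟨p - (2*M-1), hpn⟩ = ⟨p, hpK⟩ := by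
            apply Fin.ext
            show ((embF K (2*M-1) L ⟨p - (2*M-1), hpn⟩ : Fin K) : ℕ) = p
            rw [hvv]
            omega
          rw [hemb] at hval
          exact hval
  -- put the counting together (natural numbers)
  have hTnat : FS.card ≤ FA.card + (J+1) * (2^M * ((K+2) * FA'.card)) := by
    calc FS.card ≤ ∑ j ∈ Finset.Iic J, (Fcor j).card := hFS_le
      _ ≤ ∑ j ∈ Finset.Iic J, ((Hs j).card + (Gs j).card) :=
          Finset.sum_le_sum (fun j _ => hsplit j)
      _ = ∑ j ∈ Finset.Iic J, (Hs j).card + ∑ j ∈ Finset.Iic J, (Gs j).card :=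
          Finset.sum_add_distrib
      _ ≤ FA.card + ∑ j ∈ Finset.Iic J, 2^M * ((K+2) * FA'.card) :=
          Nat.add_le_add hHsum (Finset.sum_le_sum hG)
      _ = FA.card + (J+1) * (2^M * ((K+2) * FA'.card)) := by
          rw [Finset.sum_const, Nat.card_Iic, smul_eq_mul]
  -- cardinality formulas
  have hNK : FA.card = (K + R - 2).choose K := card_aliceSet K R hR2
  have hN0 : FA'.card = ((K - (2*M-1)) + R - 2).choose (K - (2*M-1)) := card_aliceSet _ R hR2
  have htele := choose_tele hK2 hKR (2*M-1) (K - (2*M-1)) (by omega)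
  rw [show K - (2*M-1) + (2*M-1) = K by omega] at htele
  -- real arithmetic
  set NKr := ((K + R - 2).choose K : ℝ) with hNKr
  set N0r := (((K - (2*M-1)) + R - 2).choose (K - (2*M-1)) : ℝ) with hN0r
  have hNKr0 : 0 ≤ NKr := by positivity
  have hN0r0 : 0 ≤ N0r := by positivity
  have hKr2 : (2:ℝ) ≤ (K:ℝ) := by exact_mod_cast hK2
  have h2s : (2:ℝ)^(2*M-1) * N0r ≤ 3 * NKr := by
    rw [show 2*K-2 = 2*(K-1) by omega] at htele
    have hc1 : ((K-1:ℕ):ℝ) = (K:ℝ)-1 := by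
      rw [Nat.cast_sub (show 1 ≤ K by omega)]; norm_num
    have htr : (2*((K:ℝ)-1))^(2*M-1) * N0r ≤ (K:ℝ)^(2*M-1) * NKr := by
      have h1 := (Nat.cast_le (α := ℝ)).mpr htele
      push_cast at h1
      rw [hc1] at h1
      exact h1
    rw [mul_pow] at htr
    have hpr : ((K:ℝ))^(2*M-1) ≤ 3 * ((K:ℝ) - 1)^(2*M-1) := pow_ratio hK2 (by omega)
    have hK1pos : (0:ℝ) < ((K:ℝ) - 1)^(2*M-1) := by
      apply pow_pos; linarith
    apply le_of_mul_le_mul_right _ hK1pos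
    calc (2:ℝ)^(2*M-1) * N0r * ((K:ℝ)-1)^(2*M-1)
        = 2^(2*M-1) * ((K:ℝ)-1)^(2*M-1) * N0r := by ring
      _ ≤ (K:ℝ)^(2*M-1) * NKr := htr
      _ ≤ 3 * ((K:ℝ)-1)^(2*M-1) * NKr := by
          apply mul_le_mul_of_nonneg_right hpr hNKr0
      _ = 3 * NKr * ((K:ℝ)-1)^(2*M-1) := by ring
  have hKsq : ((K:ℝ))^2 ≤ (2:ℝ)^M := by
    have hKpos : (0:ℝ) < (K:ℝ)^2 := by positivity
    calc ((K:ℝ))^2 = (2:ℝ) ^ (Real.logb 2 ((K:ℝ)^2)) :=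
          (Real.rpow_logb (by norm_num) (by norm_num) hKpos).symm
      _ ≤ (2:ℝ) ^ ((M:ℕ):ℝ) := by
          apply Real.rpow_le_rpow_of_exponent_le one_le_two
          rw [Real.logb_pow]
          push_cast
          exact hlog
      _ = (2:ℝ)^M := Real.rpow_natCast 2 M
  have hstep : ((K:ℝ))^2 * ((2:ℝ)^M * N0r) ≤ 6 * NKr := by
    have hpow : (2:ℝ)^M * ((2:ℝ)^M * N0r) = 2 * ((2:ℝ)^(2*M-1) * N0r) := by
      rw [← mul_assoc, ← pow_add]
      rw [show M + M = (2*M-1) + 1 by omega, pow_succ]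
      ring
    calc ((K:ℝ))^2 * ((2:ℝ)^M * N0r)
        ≤ (2:ℝ)^M * ((2:ℝ)^M * N0r) := by
          apply mul_le_mul_of_nonneg_right hKsq (by positivity)
      _ = 2 * ((2:ℝ)^(2*M-1) * N0r) := hpow
      _ ≤ 2 * (3 * NKr) := by linarith
      _ = 6 * NKr := by ring
  -- final assembly
  rw [Finset.card_product, hFBcard, hNK]
  rw [le_div_iff₀ (by positivity : (0:ℝ) < (K:ℝ))]
  have hT : (FS.card : ℝ) ≤ NKr + (J+1) * ((2:ℝ)^M * ((K+2) * N0r)) := by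
    have := hTnat
    rw [hNK, hN0] at this
    have hcast : (FS.card : ℝ) ≤ (((K + R - 2).choose K +
        (J+1) * (2^M * ((K+2) * ((K - (2*M-1)) + R - 2).choose (K - (2*M-1)))) : ℕ) : ℝ) := by
      exact_mod_cast this
    push_cast at hcast
    convert hcast using 2 <;> push_cast <;> ring
  have hKle : (K:ℝ) ≤ 2*M*(J+1) := by
    have : (K:ℕ) ≤ 2*M*(J+1) := by
      calc K = 2*M*J := hJK.symm
      _ ≤ 2*M*(J+1) := Nat.mul_le_mul_left _ (by omega)
    exact_mod_cast this
  have hB : (J+1:ℝ) * ((2:ℝ)^M * ((K+2) * N0r)) * K ≤ 12 * ((J+1) * NKr) := by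
    have hKK : ((K:ℝ)+2) * K ≤ 2 * (K:ℝ)^2 := by nlinarith
    have hJ0 : (0:ℝ) ≤ (J+1:ℝ) := by positivity
    have h2N : (0:ℝ) ≤ (2:ℝ)^M * N0r := by positivity
    calc (J+1:ℝ) * ((2:ℝ)^M * ((K+2) * N0r)) * K
        = (J+1:ℝ) * ((((K:ℝ)+2) * K) * ((2:ℝ)^M * N0r)) := by ring
      _ ≤ (J+1:ℝ) * ((2 * (K:ℝ)^2) * ((2:ℝ)^M * N0r)) := by
          apply mul_le_mul_of_nonneg_left _ hJ0
          apply mul_le_mul_of_nonneg_right hKK h2N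
      _ = (J+1:ℝ) * (2 * ((K:ℝ)^2 * ((2:ℝ)^M * N0r))) := by ring
      _ ≤ (J+1:ℝ) * (2 * (6 * NKr)) := by
          apply mul_le_mul_of_nonneg_left _ hJ0
          linarith
      _ = 12 * ((J+1) * NKr) := by ring
  have hMr : (1:ℝ) ≤ (M:ℝ) := by exact_mod_cast hM
  calc (FS.card : ℝ) * K
      ≤ (NKr + (J+1) * ((2:ℝ)^M * ((K+2) * N0r))) * K := by
        apply mul_le_mul_of_nonneg_right hT (by positivity)
    _ = NKr * K + (J+1) * ((2:ℝ)^M * ((K+2) * N0r)) * K := by ring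
    _ ≤ NKr * (2*M*(J+1)) + 12 * ((J+1) * NKr) := by
        have := mul_le_mul_of_nonneg_left hKle hNKr0
        linarith
    _ = (2*M + 12) * ((J+1) * NKr) := by ring
    _ ≤ (64*M) * ((J+1) * NKr) := by
        apply mul_le_mul_of_nonneg_right _ (by positivity)
        linarith
    _ = 64 * (M:ℝ) * (((K + R - 2).choose K * (J + 1) : ℕ) : ℝ) := by
        rw [hNKr]; push_cast; ring
end
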